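/- arXiv:1701.02204 — 10 statements merged into one kernel-verified Lean document; each statement's English description precedes it below -/
import Mathlib

section
/- Let G be a finite simple graph and let v and w be two adjacent vertices of G. Suppose that (i) the independence polynomial p(G,x) is LC+, and (ii) for every q in [0,1] the polynomial p(G,x)^2 - 4q x^2 p(G - N[v], x) p(G - N[w], x) is LC+. Then for every n ≥ 1 the coefficient sequence of the independence polynomial of the n-concatenation G^n(v,w) (i.e. the independent set sequence of G^n(v,w)) is log-concave. -/
/-!
Write `P n = p(G^n(v,w), x)`, `p = p(G, x)`, `c = x² p(G - N[v], x) p(G - N[w], x)`, and `W n`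
for the part of `P n` coming from independent sets that contain `w` in the last copy of `G`.
Splitting off the last copy gives `P (n + 1) = P n * p - W n * x p(G - N[v], x)` and, as `v` and
`w` are adjacent, `W (n + 1) = P n * x p(G - N[w], x)`. Hence `P (n + 2) = p P (n + 1) - c P n`
with `P 0 = 1`, `P 1 = p`, so `P n` is the Dickson polynomial of the second kind `E_n(p, c)`, a
homogenised Chebyshev polynomial `U_n`. The roots `cos ((k + 1) π / (n + 1))` of `U_n` come in
pairs `±` and give the factorisation
`P n = p ^ (n % 2) * ∏_{k < n/2} (p² - 4 cos² ((k + 1) π / (n + 1)) c)`.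
Every factor is LC⁺ by hypothesis (with `q = cos²`), and LC⁺ is closed under products by the
symmetrised `2 × 2` Cauchy–Binet identity for the coefficient sequences.
-/

open Finset Polynomial
open scoped Classical

def IsIndepFinset {V : Type*} (G : SimpleGraph V) (s : Finset V) : Prop :=
  ∀ a ∈ s, ∀ b ∈ s, ¬ G.Adj a b

noncomputable def indepCount {V : Type*} [Fintype V] (G : SimpleGraph V) (t : ℕ) : ℕ :=
  ((Finset.univ : Finset (Finset V)).filter (fun s => IsIndepFinset G s ∧ s.card = t)).card

/-- The independence polynomial `p(G, x)`. -/
noncomputable def indepPoly {V : Type*} [Fintype V] (G : SimpleGraph V) : Polynomial ℝ :=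
  ∑ s ∈ (Finset.univ : Finset (Finset V)).filter (fun s => IsIndepFinset G s),
    (X : Polynomial ℝ) ^ s.card

def LCPlus (p : Polynomial ℝ) : Prop :=
  (∀ i ≤ p.natDegree, 0 < p.coeff i) ∧
  ∀ k : ℕ, p.coeff k * p.coeff (k + 2) ≤ p.coeff (k + 1) ^ 2

def UnimodalNat (a : ℕ → ℕ) : Prop :=
  ∃ m : ℕ, (∀ i j : ℕ, i ≤ j → j ≤ m → a i ≤ a j) ∧ (∀ i j : ℕ, m ≤ i → i ≤ j → a j ≤ a i)

/-- The `n`-concatenation `G^n(v,w)`. -/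
def concat {V : Type*} (G : SimpleGraph V) (v w : V) (n : ℕ) :
    SimpleGraph (V × Fin n) :=
  SimpleGraph.fromRel (fun p q =>
    (p.2 = q.2 ∧ G.Adj p.1 q.1) ∨ (p.1 = w ∧ q.1 = v ∧ (p.2 : ℕ) + 1 = (q.2 : ℕ)))

/-- `G - N[u]`. -/
def delNbhd {V : Type*} (G : SimpleGraph V) (u : V) :
    SimpleGraph {x : V // ¬ (x = u ∨ G.Adj u x)} :=
  G.comap Subtype.val

open Real

namespace Polynomial

section CoeffInt

variable {R : Type*}

noncomputable def coeffInt [Semiring R] (p : R[X]) (k : ℤ) : R :=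
  if 0 ≤ k then p.coeff k.toNat else 0

@[simp]
lemma coeffInt_natCast [Semiring R] (p : R[X]) (n : ℕ) : p.coeffInt n = p.coeff n := by
  simp [coeffInt]

lemma coeffInt_of_neg [Semiring R] (p : R[X]) {k : ℤ} (hk : k < 0) : p.coeffInt k = 0 := by
  simp [coeffInt, not_le.mpr hk]

lemma coeff_mul_eq_sum_coeffInt [Semiring R] (p q : R[X]) (m : ℕ) (d : ℤ) {I : Finset ℤ}
    (hI : Icc d (m + d) ⊆ I) :
    (p * q).coeff m = ∑ s ∈ I, p.coeffInt (s - d) * q.coeffInt (m + d - s) := by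
  rw [← sum_subset hI fun s _ hs => ?_]
  · rw [coeff_mul, Nat.sum_antidiagonal_eq_sum_range_succ_mk]
    refine sum_nbij' (fun i => i + d) (fun s => (s - d).toNat) ?_ ?_ ?_ ?_ ?_ <;>
      intro i hi <;> simp only [mem_range, mem_Icc] at hi ⊢
    · omega
    · omega
    · omega
    · omega
    · rw [show (m : ℤ) + d - (i + d) = ((m - i : ℕ) : ℤ) by omega]
      simp
  · rw [mem_Icc, not_and_or, not_le, not_le] at hs
    rcases hs with hs | hs
    · rw [coeffInt_of_neg p (by omega), zero_mul]
    · rw [coeffInt_of_neg q (by omega), mul_zero]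

/-- The symmetrised `2 × 2` Cauchy–Binet identity for the Toeplitz matrices of the
coefficients of `p` and `q`. -/
lemma two_mul_coeff_mul_sq_sub [CommRing R] (p q : R[X]) (k : ℕ) :
    2 * ((p * q).coeff (k + 1) ^ 2 - (p * q).coeff k * (p * q).coeff (k + 2)) =
      ∑ s ∈ Icc (0 : ℤ) (k + 2), ∑ t ∈ Icc (0 : ℤ) (k + 2),
        (p.coeffInt s * p.coeffInt (t - 1) - p.coeffInt (s - 1) * p.coeffInt t) *
          (q.coeffInt (k + 1 - s) * q.coeffInt (k + 2 - t) -
            q.coeffInt (k + 1 - t) * q.coeffInt (k + 2 - s)) := by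
  set I := Icc (0 : ℤ) (k + 2)
  have hsum : (p * q).coeff (k + 1) ^ 2 - (p * q).coeff k * (p * q).coeff (k + 2) =
      ∑ s ∈ I, ∑ t ∈ I, (p.coeffInt s * p.coeffInt (t - 1) - p.coeffInt (s - 1) * p.coeffInt t) *
        (q.coeffInt (k + 1 - s) * q.coeffInt (k + 2 - t)) := by
    have e (m : ℕ) (d : ℤ) (hd : 0 ≤ d) (hm : m + d ≤ k + 2) :=
      coeff_mul_eq_sum_coeffInt p q m d (Icc_subset_Icc hd hm)
    rw [sq]
    nth_rw 1 [e (k + 1) 0 le_rfl (by omega)]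
    rw [e (k + 1) 1 zero_le_one (by omega), e k 1 zero_le_one (by omega),
      e (k + 2) 0 le_rfl (by omega), sum_mul_sum, sum_mul_sum, ← sum_sub_distrib]
    refine sum_congr rfl fun s _ => ?_
    rw [← sum_sub_distrib]
    refine sum_congr rfl fun t _ => ?_
    push_cast
    ring_nf
  rw [hsum, two_mul]
  nth_rw 1 [sum_comm]
  rw [← sum_add_distrib]
  refine sum_congr rfl fun s _ => ?_
  rw [← sum_add_distrib]
  refine sum_congr rfl fun t _ => ?_
  ring

end CoeffInt

end Polynomial

namespace LCPlus

variable {p q : ℝ[X]}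

lemma coeff_nonneg (hp : LCPlus p) (i : ℕ) : 0 ≤ p.coeff i := by
  rcases le_or_gt i p.natDegree with h | h
  · exact (hp.1 i h).le
  · rw [coeff_eq_zero_of_natDegree_lt h]

lemma coeffInt_nonneg (hp : LCPlus p) (k : ℤ) : 0 ≤ p.coeffInt k := by
  unfold coeffInt
  split_ifs
  exacts [hp.coeff_nonneg _, le_rfl]

lemma ne_zero (hp : LCPlus p) : p ≠ 0 := fun h => by
  simpa [h] using hp.1 0 (Nat.zero_le _)

lemma coeff_mul_coeff_succ_le (hp : LCPlus p) {i j : ℕ} (hij : i ≤ j) :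
    p.coeff i * p.coeff (j + 1) ≤ p.coeff (i + 1) * p.coeff j := by
  induction j, hij using Nat.le_induction with
  | base => rw [mul_comm]
  | succ j hij ih =>
    rcases (hp.coeff_nonneg (j + 2)).eq_or_lt with h | h
    · rw [← h, mul_zero]
      exact mul_nonneg (hp.coeff_nonneg _) (hp.coeff_nonneg _)
    have hdeg : j + 1 ≤ p.natDegree := by
      by_contra! hlt
      exact h.ne' (coeff_eq_zero_of_natDegree_lt (by omega))
    refine le_of_mul_le_mul_right ?_ (hp.1 (j + 1) hdeg)
    calc p.coeff i * p.coeff (j + 2) * p.coeff (j + 1)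
        = p.coeff i * p.coeff (j + 1) * p.coeff (j + 2) := by ring
      _ ≤ p.coeff (i + 1) * p.coeff j * p.coeff (j + 2) := by gcongr
      _ = p.coeff (i + 1) * (p.coeff j * p.coeff (j + 2)) := by ring
      _ ≤ p.coeff (i + 1) * p.coeff (j + 1) ^ 2 := by
        gcongr
        · exact hp.coeff_nonneg _
        · exact hp.2 j
      _ = p.coeff (i + 1) * p.coeff (j + 1) * p.coeff (j + 1) := by ring

lemma coeffInt_sub_one_mul_le (hp : LCPlus p) {s t : ℤ} (hst : s ≤ t) :
    p.coeffInt (s - 1) * p.coeffInt t ≤ p.coeffInt s * p.coeffInt (t - 1) := by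
  rcases lt_or_ge s 1 with hs | hs
  · rw [coeffInt_of_neg p (by omega), zero_mul]
    exact mul_nonneg (hp.coeffInt_nonneg _) (hp.coeffInt_nonneg _)
  obtain ⟨i, rfl⟩ : ∃ i : ℕ, s = i + 1 := ⟨(s - 1).toNat, by omega⟩
  obtain ⟨j, rfl⟩ : ∃ j : ℕ, t = j + 1 := ⟨(t - 1).toNat, by omega⟩
  simp only [add_sub_cancel_right]
  exact_mod_cast hp.coeff_mul_coeff_succ_le (by omega : i ≤ j)

lemma coeff_mul_coeff_le_sq (hp : LCPlus p) (hq : LCPlus q) (k : ℕ) :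
    (p * q).coeff k * (p * q).coeff (k + 2) ≤ (p * q).coeff (k + 1) ^ 2 := by
  suffices 0 ≤ 2 * ((p * q).coeff (k + 1) ^ 2 - (p * q).coeff k * (p * q).coeff (k + 2)) by
    linarith
  rw [two_mul_coeff_mul_sq_sub]
  refine sum_nonneg fun s _ => sum_nonneg fun t _ => ?_
  have hq' : ∀ {s t : ℤ}, s ≤ t →
      q.coeffInt (k + 1 - t) * q.coeffInt (k + 2 - s) ≤
        q.coeffInt (k + 1 - s) * q.coeffInt (k + 2 - t) := fun {s t} hst => by
    have := hq.coeffInt_sub_one_mul_le (by omega : (k : ℤ) + 2 - t ≤ k + 2 - s)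
    rwa [show (k : ℤ) + 2 - t - 1 = k + 1 - t by ring, show (k : ℤ) + 2 - s - 1 = k + 1 - s by ring,
      mul_comm (q.coeffInt (k + 2 - t))] at this
  rcases le_total s t with hst | hts
  · exact mul_nonneg (sub_nonneg.2 (hp.coeffInt_sub_one_mul_le hst)) (sub_nonneg.2 (hq' hst))
  · refine mul_nonneg_of_nonpos_of_nonpos ?_ ?_
    · linarith [hp.coeffInt_sub_one_mul_le hts]
    · linarith [hq' hts]

lemma coeff_mul_pos (hp : LCPlus p) (hq : LCPlus q) {i : ℕ}
    (hi : i ≤ p.natDegree + q.natDegree) : 0 < (p * q).coeff i := by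
  rw [coeff_mul]
  have hmem : (min i p.natDegree, i - min i p.natDegree) ∈ antidiagonal i := by
    rw [HasAntidiagonal.mem_antidiagonal]
    omega
  refine lt_of_lt_of_le ?_ (single_le_sum (fun x _ => mul_nonneg (hp.coeff_nonneg x.1)
    (hq.coeff_nonneg x.2)) hmem)
  exact mul_pos (hp.1 _ (min_le_right _ _)) (hq.1 _ (by omega))

lemma mul (hp : LCPlus p) (hq : LCPlus q) : LCPlus (p * q) :=
  ⟨fun _ hi => hp.coeff_mul_pos hq (natDegree_mul hp.ne_zero hq.ne_zero ▸ hi),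
    hp.coeff_mul_coeff_le_sq hq⟩

lemma one : LCPlus (1 : ℝ[X]) := by
  refine ⟨fun i hi => ?_, fun k => ?_⟩
  · rw [natDegree_one, Nat.le_zero] at hi
    simp [hi]
  · simp [coeff_one]

lemma pow (hp : LCPlus p) (n : ℕ) : LCPlus (p ^ n) := by
  induction n with
  | zero => simpa using one
  | succ n ih => simpa [pow_succ] using ih.mul hp

lemma prod {ι : Type*} {s : Finset ι} {f : ι → ℝ[X]} (h : ∀ i ∈ s, LCPlus (f i)) :
    LCPlus (∏ i ∈ s, f i) :=
  Finset.prod_induction f LCPlus (fun _ _ => mul) one h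

end LCPlus

lemma prod_range_sub_of_antisymm {R : Type*} [CommRing R] [NoZeroDivisors R] [CharZero R]
    (x : R) (f : ℕ → R) (n : ℕ) (hf : ∀ k < n, f (n - 1 - k) = -f k) :
    ∏ k ∈ range n, (x - f k) = x ^ (n % 2) * ∏ k ∈ range (n / 2), (x ^ 2 - f k ^ 2) := by
  have hpair (m : ℕ) (g : ℕ → ℕ) (hg : ∀ k < m, g (m - 1 - k) = n - 1 - k ∧ k < n) :
      (∏ k ∈ range m, (x - f k)) * ∏ k ∈ range m, (x - f (g k)) =
        ∏ k ∈ range m, (x ^ 2 - f k ^ 2) := by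
    rw [← prod_range_reflect (fun k => x - f (g k)), ← prod_mul_distrib]
    refine prod_congr rfl fun k hk => ?_
    obtain ⟨hgk, hkn⟩ := hg k (mem_range.mp hk)
    rw [hgk, hf k hkn]
    ring
  obtain ⟨m, rfl | rfl⟩ := Nat.even_or_odd' n
  · rw [two_mul, prod_range_add, hpair m _ fun k hk => ⟨by omega, by omega⟩, ← two_mul,
      Nat.mul_mod_right, Nat.mul_div_cancel_left _ two_pos, pow_zero, one_mul]
  · have hmid : f m = 0 := by
      have := hf m (by omega)
      rwa [show 2 * m + 1 - 1 - m = m by omega, CharZero.eq_neg_self_iff] at this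
    rw [show (2 * m + 1) % 2 = 1 by omega, show (2 * m + 1) / 2 = m by omega, pow_one,
      show range (2 * m + 1) = range (m + (m + 1)) by ring_nf, prod_range_add, prod_range_succ',
      add_zero, hmid, sub_zero, ← mul_assoc, hpair m _ fun k hk => ⟨by omega, by omega⟩, mul_comm]

lemma cos_reflect_mul_pi_div_succ {n k : ℕ} (hk : k < n) :
    cos ((((n - 1 - k : ℕ) : ℝ) + 1) * π / (n + 1)) = -cos ((k + 1) * π / (n + 1)) := by
  rw [← cos_pi_sub]
  congr 1
  rw [Nat.cast_sub (by omega), Nat.cast_sub (by omega)]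
  field_simp
  ring

namespace Polynomial

lemma Chebyshev.eval_U_real_eq_prod (n : ℕ) (x : ℝ) :
    (Chebyshev.U ℝ n).eval x = 2 ^ n * ∏ k ∈ range n, (x - cos ((k + 1) * π / (n + 1))) := by
  have hinj := (range n).nodup_map_iff_injOn.mp (Chebyshev.roots_U_real_nodup n)
  have hroots : (Chebyshev.U ℝ n).roots =
      (range n).val.map fun k : ℕ => cos ((k + 1) * π / (n + 1)) := by
    rw [Chebyshev.roots_U_real, image_val_of_injOn hinj]
  have hcard : Multiset.card (Chebyshev.U ℝ n).roots = (Chebyshev.U ℝ n).natDegree := by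
    rw [hroots, Multiset.card_map, card_val, card_range, Chebyshev.natDegree_U_natCast]
  conv_lhs => rw [← C_leadingCoeff_mul_prod_multiset_X_sub_C hcard]
  rw [Chebyshev.leadingCoeff_U_natCast, hroots, Multiset.map_map, eval_mul, eval_C,
    eval_multiset_prod, Multiset.map_map, prod_eq_multiset_prod]
  simp

lemma eval_dickson_sq_mul {R : Type*} [CommRing R] (k : ℕ) (a δ x : R) (n : ℕ) :
    (dickson k (δ ^ 2 * a) n).eval (δ * x) = δ ^ n * (dickson k a n).eval x := by
  induction n using Nat.twoStepInduction with
  | zero => simp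
  | one => simp
  | more n ih₀ ih₁ =>
    simp only [dickson_add_two, eval_sub, eval_mul, eval_X, eval_C, ih₀, ih₁]
    ring

lemma map_eval_dickson {R S : Type*} [CommRing R] [CommRing S] (f : R →+* S) (k : ℕ)
    (a b : R) (n : ℕ) : f ((dickson k a n).eval b) = (dickson k (f a) n).eval (f b) := by
  rw [← map_dickson f, eval_map, eval₂_at_apply]

lemma eval_dickson_two_real (n : ℕ) (β : ℝ) {γ : ℝ} (hγ : 0 < γ) :
    (dickson 2 γ n).eval β =
      β ^ (n % 2) * ∏ k ∈ range (n / 2), (β ^ 2 - 4 * cos ((k + 1) * π / (n + 1)) ^ 2 * γ) := by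
  set δ := √γ
  have hδ : 0 < δ := sqrt_pos.mpr hγ
  have hδγ : δ ^ 2 = γ := sq_sqrt hγ.le
  have hprod : (dickson 2 γ n).eval β =
      ∏ k ∈ range n, (β - 2 * δ * cos ((k + 1) * π / (n + 1))) := by
    have hscale := eval_dickson_sq_mul 2 1 δ (β / δ) n
    rw [mul_one, hδγ, mul_div_cancel₀ _ hδ.ne'] at hscale
    rw [hscale, dickson_two_one_eq_chebyshev_U, eval_comp, Chebyshev.eval_U_real_eq_prod,
      ← mul_assoc, ← mul_pow, pow_eq_prod_const, ← prod_mul_distrib]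
    refine prod_congr rfl fun k _ => ?_
    simp only [eval_mul, eval_C, eval_X, invOf_eq_inv]
    field_simp
  rw [hprod, prod_range_sub_of_antisymm _ _ _ fun k hk => ?_]
  · rw [← hδγ]
    exact congrArg _ (prod_congr rfl fun k _ => by ring)
  · rw [cos_reflect_mul_pi_div_succ hk, mul_neg]

theorem eval_dickson_two_eq_prod {A : Type*} [CommRing A] [Algebra ℝ A] (a b : A) (n : ℕ) :
    (dickson 2 a n).eval b =
      b ^ (n % 2) * ∏ k ∈ range (n / 2), (b ^ 2 - (4 * cos ((k + 1) * π / (n + 1)) ^ 2) • a) := by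
  -- both sides are polynomials in `b` and `a`, so it suffices to compare them for real `a > 0`
  have huniv : (dickson 2 (MvPolynomial.X 1) n).eval (MvPolynomial.X 0) =
      (MvPolynomial.X 0 : MvPolynomial (Fin 2) ℝ) ^ (n % 2) * ∏ k ∈ range (n / 2),
        (MvPolynomial.X 0 ^ 2 - (4 * cos ((k + 1) * π / (n + 1)) ^ 2) • MvPolynomial.X 1) := by
    refine MvPolynomial.funext_set ![Set.univ, Set.Ioi 0] (fun i => ?_) fun x hx => ?_
    · fin_cases i
      exacts [Set.infinite_univ, Set.Ioi_infinite 0]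
    · have hx1 : 0 < x 1 := hx 1 (Set.mem_univ _)
      rw [map_eval_dickson, MvPolynomial.eval_X, MvPolynomial.eval_X,
        eval_dickson_two_real _ _ hx1]
      simp
  simpa [map_eval_dickson] using congrArg (MvPolynomial.aeval ![b, a]).toRingHom huniv

end Polynomial

section IndepSets

variable {α β : Type*}

lemma isIndepFinset_map_iff (H : SimpleGraph β) (f : α ↪ β) (s : Finset α) :
    IsIndepFinset H (s.map f) ↔ IsIndepFinset (H.comap f) s := by
  simp [IsIndepFinset]

lemma isIndepFinset_disjSum_iff (H : SimpleGraph (α ⊕ β)) (S : Finset α) (T : Finset β) :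
    IsIndepFinset H (S.disjSum T) ↔ IsIndepFinset (H.comap Sum.inl) S ∧
      IsIndepFinset (H.comap Sum.inr) T ∧ ∀ a ∈ S, ∀ b ∈ T, ¬ H.Adj (.inl a) (.inr b) := by
  simp only [IsIndepFinset, Sum.forall, inl_mem_disjSum, inr_mem_disjSum, SimpleGraph.comap_adj]
  have := @H.adj_comm
  grind

end IndepSets

section IndepPoly

variable {V : Type*} [Fintype V] (G : SimpleGraph V)

lemma coeff_indepPoly (t : ℕ) : (indepPoly G).coeff t = indepCount G t := by
  simp [indepPoly, indepCount, finsetSum_coeff, coeff_X_pow, filter_filter, eq_comm]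

lemma indepPoly_comap_subtype (p : V → Prop) [DecidablePred p] :
    indepPoly (G.comap (Subtype.val : {x // p x} → V)) =
      ∑ s ∈ univ.filter (fun s => IsIndepFinset G s ∧ ∀ x ∈ s, p x), X ^ #s := by
  refine sum_nbij' (fun t => t.map (.subtype p)) (fun s => s.subtype p)
    (fun t ht => ?_) (fun s hs => ?_) (fun t _ => ?_) (fun s hs => ?_) (fun t _ => by rw [card_map])
  · rw [mem_filter] at ht ⊢
    refine ⟨mem_univ _, (isIndepFinset_map_iff G _ t).mpr ht.2, fun x hx => ?_⟩
    obtain ⟨y, -, rfl⟩ := mem_map.mp hx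
    exact y.2
  · rw [mem_filter] at hs ⊢
    rw [← subtype_map_of_mem hs.2.2, isIndepFinset_map_iff] at hs
    exact ⟨mem_univ _, hs.2.1⟩
  · ext x
    simp [x.2]
  · exact subtype_map_of_mem (mem_filter.mp hs).2.2

lemma sum_isIndepFinset_mem_eq_X_mul (u : V) :
    ∑ s ∈ univ.filter (fun s => IsIndepFinset G s ∧ u ∈ s), X ^ #s =
      X * ∑ s ∈ univ.filter (fun s => IsIndepFinset G s ∧ ∀ x ∈ s, ¬ (x = u ∨ G.Adj u x)),
        (X : ℝ[X]) ^ #s := by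
  rw [mul_sum]
  refine sum_nbij' (fun s => s.erase u) (fun s => insert u s) (fun s hs => ?_) (fun s hs => ?_)
    (fun s hs => insert_erase (mem_filter.mp hs).2.2) (fun s hs => ?_) (fun s hs => ?_)
  · simp only [mem_filter, mem_univ, true_and] at hs ⊢
    refine ⟨fun a ha b hb => hs.1 a (mem_of_mem_erase ha) b (mem_of_mem_erase hb),
      fun x hx => ?_⟩
    rintro (rfl | hux)
    · exact (notMem_erase x s) hx
    · exact hs.1 u hs.2 x (mem_of_mem_erase hx) hux
  · simp only [mem_filter, mem_univ, true_and, mem_insert_self, and_true] at hs ⊢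
    intro a ha b hb
    rcases mem_insert.mp ha with ha | ha <;> rcases mem_insert.mp hb with hb | hb
    · rw [ha, hb]
      exact G.irrefl
    · rw [ha]
      exact fun h => hs.2 b hb (Or.inr h)
    · rw [hb]
      exact fun h => hs.2 a ha (Or.inr h.symm)
    · exact hs.1 a ha b hb
  · exact erase_insert fun hu => (mem_filter.mp hs).2.2 u hu (Or.inl rfl)
  · rw [← pow_succ', card_erase_add_one (mem_filter.mp hs).2.2]

lemma X_mul_indepPoly_delNbhd (u : V) :
    X * indepPoly (delNbhd G u) =
      ∑ s ∈ univ.filter (fun s => IsIndepFinset G s ∧ u ∈ s), X ^ #s := by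
  rw [delNbhd, indepPoly_comap_subtype, sum_isIndepFinset_mem_eq_X_mul]

end IndepPoly

def lastCopyEquiv (V : Type*) (n : ℕ) : (V × Fin n) ⊕ V ≃ V × Fin (n + 1) where
  toFun := Sum.elim (fun q => (q.1, q.2.castSucc)) (fun a => (a, Fin.last n))
  invFun q := Fin.lastCases (Sum.inr q.1) (fun i => Sum.inl (q.1, i)) q.2
  left_inv := by rintro (⟨a, i⟩ | a) <;> simp
  right_inv := by
    rintro ⟨a, i⟩
    induction i using Fin.lastCases <;> simp

lemma Fintype.sum_finset_lastCopyEquiv {V M : Type*} [Fintype V] [AddCommMonoid M] (n : ℕ)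
    (f : Finset (V × Fin (n + 1)) → M) :
    ∑ s, f s = ∑ S : Finset (V × Fin n), ∑ T : Finset V,
      f ((S.disjSum T).map (lastCopyEquiv V n).toEmbedding) := by
  rw [← Fintype.sum_prod_type']
  exact (Fintype.sum_equiv (sumEquiv.toEquiv.symm.trans (lastCopyEquiv V n).finsetCongr) _ _
    fun _ => rfl).symm

section Concat

variable {V : Type*} (G : SimpleGraph V) (v w : V)

/-- Stated with `∃` so that it makes sense (and fails) for `n = 0`. -/
def MemLastCopy {n : ℕ} (s : Finset (V × Fin n)) : Prop :=
  ∃ i : Fin n, (i : ℕ) + 1 = n ∧ (w, i) ∈ s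

lemma concat_adj {n : ℕ} (p q : V × Fin n) :
    (concat G v w n).Adj p q ↔ p ≠ q ∧
      ((p.2 = q.2 ∧ G.Adj p.1 q.1) ∨ (p.1 = w ∧ q.1 = v ∧ (p.2 : ℕ) + 1 = q.2) ∨
        (q.1 = w ∧ p.1 = v ∧ (q.2 : ℕ) + 1 = p.2)) := by
  rw [concat, SimpleGraph.fromRel_adj, G.adj_comm q.1, @eq_comm _ q.2]
  tauto

lemma concat_comap_inl_lastCopyEquiv (n : ℕ) :
    ((concat G v w (n + 1)).comap (lastCopyEquiv V n)).comap Sum.inl = concat G v w n := by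
  ext p q
  simp [lastCopyEquiv, concat_adj, Prod.ext_iff, Fin.castSucc_inj]

lemma concat_comap_inr_lastCopyEquiv (n : ℕ) :
    ((concat G v w (n + 1)).comap (lastCopyEquiv V n)).comap Sum.inr = G := by
  ext a b
  simpa [lastCopyEquiv, concat_adj] using G.ne_of_adj

lemma concat_adj_lastCopyEquiv_inl_inr {n : ℕ} (p : V × Fin n) (b : V) :
    (concat G v w (n + 1)).Adj (lastCopyEquiv V n (.inl p)) (lastCopyEquiv V n (.inr b)) ↔
      p.1 = w ∧ b = v ∧ (p.2 : ℕ) + 1 = n := by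
  simp only [lastCopyEquiv, Equiv.coe_fn_mk, Sum.elim_inl, Sum.elim_inr, concat_adj,
    Fin.val_last, Fin.val_castSucc]
  grind

lemma isIndepFinset_concat_succ_iff {n : ℕ} (S : Finset (V × Fin n)) (T : Finset V) :
    IsIndepFinset (concat G v w (n + 1)) ((S.disjSum T).map (lastCopyEquiv V n).toEmbedding) ↔
      IsIndepFinset (concat G v w n) S ∧ IsIndepFinset G T ∧ ¬ (MemLastCopy w S ∧ v ∈ T) := by
  rw [isIndepFinset_map_iff, Equiv.coe_toEmbedding, isIndepFinset_disjSum_iff,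
    concat_comap_inl_lastCopyEquiv, concat_comap_inr_lastCopyEquiv]
  simp only [SimpleGraph.comap_adj, concat_adj_lastCopyEquiv_inl_inr, MemLastCopy]
  refine and_congr_right' (and_congr_right' ⟨?_, ?_⟩)
  · rintro h ⟨⟨i, hi, hwi⟩, hv⟩
    exact h _ hwi _ hv ⟨rfl, rfl, hi⟩
  · rintro h ⟨a, i⟩ ha b hb ⟨rfl, rfl, hi⟩
    exact h ⟨⟨i, hi, ha⟩, hb⟩

lemma memLastCopy_lastCopyEquiv {n : ℕ} (S : Finset (V × Fin n)) (T : Finset V) :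
    MemLastCopy w ((S.disjSum T).map (lastCopyEquiv V n).toEmbedding) ↔ w ∈ T := by
  have hlast : ∀ i : Fin (n + 1), (i : ℕ) + 1 = n + 1 ↔ i = Fin.last n := by
    simp [Fin.ext_iff]
  simp only [MemLastCopy, hlast, exists_eq_left]
  change (lastCopyEquiv V n).toEmbedding (.inr w) ∈ _ ↔ _
  rw [mem_map', inr_mem_disjSum]

variable [Fintype V]

noncomputable def concatTailPoly (n : ℕ) : ℝ[X] :=
  ∑ s ∈ univ.filter (fun s => IsIndepFinset (concat G v w n) s ∧ MemLastCopy w s), X ^ #s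

lemma indepPoly_concat_zero : indepPoly (concat G v w 0) = 1 := by
  rw [indepPoly, univ_unique, Subsingleton.elim default ∅, filter_singleton,
    if_pos (by simp [IsIndepFinset])]
  simp

lemma concatTailPoly_zero : concatTailPoly G v w 0 = 0 := by
  simp [concatTailPoly, MemLastCopy]

lemma indepPoly_concat_succ (n : ℕ) :
    indepPoly (concat G v w (n + 1)) = indepPoly (concat G v w n) * indepPoly G -
      concatTailPoly G v w n * (X * indepPoly (delNbhd G v)) := by
  rw [X_mul_indepPoly_delNbhd, indepPoly, indepPoly, indepPoly, concatTailPoly]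
  simp only [sum_filter]
  rw [Fintype.sum_finset_lastCopyEquiv, sum_mul_sum, sum_mul_sum, ← sum_sub_distrib]
  refine sum_congr rfl fun S _ => ?_
  rw [← sum_sub_distrib]
  refine sum_congr rfl fun T _ => ?_
  rw [isIndepFinset_concat_succ_iff, card_map, card_disjSum, pow_add]
  by_cases hS : IsIndepFinset (concat G v w n) S <;> by_cases hT : IsIndepFinset G T <;>
    by_cases hw : MemLastCopy w S <;> by_cases hv : v ∈ T <;> simp [hS, hT, hw, hv]

lemma concatTailPoly_succ (hvw : G.Adj v w) (n : ℕ) :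
    concatTailPoly G v w (n + 1) =
      indepPoly (concat G v w n) * (X * indepPoly (delNbhd G w)) := by
  rw [X_mul_indepPoly_delNbhd, indepPoly, concatTailPoly]
  simp only [sum_filter]
  rw [Fintype.sum_finset_lastCopyEquiv, sum_mul_sum]
  refine sum_congr rfl fun S _ => sum_congr rfl fun T _ => ?_
  rw [isIndepFinset_concat_succ_iff, memLastCopy_lastCopyEquiv, card_map, card_disjSum, pow_add]
  by_cases hS : IsIndepFinset (concat G v w n) S <;> by_cases hT : IsIndepFinset G T <;>
    by_cases hw : w ∈ T <;> simp [hS, hT, hw]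
  intro _ hv
  exact hT v hv w hw hvw

lemma indepPoly_concat_eq_eval_dickson (hvw : G.Adj v w) (n : ℕ) :
    indepPoly (concat G v w n) =
      (dickson 2 (X ^ 2 * indepPoly (delNbhd G v) * indepPoly (delNbhd G w)) n).eval
        (indepPoly G) := by
  induction n using Nat.twoStepInduction with
  | zero =>
    rw [indepPoly_concat_zero, dickson_zero, eval_sub, eval_ofNat, eval_natCast]
    norm_num
  | one => simp [indepPoly_concat_succ, indepPoly_concat_zero, concatTailPoly_zero]
  | more n ih₀ ih₁ =>
    rw [indepPoly_concat_succ, concatTailPoly_succ G v w hvw, dickson_add_two, eval_sub,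
      eval_mul, eval_mul, eval_X, eval_C, ← ih₀, ← ih₁, indepPoly_concat_succ]
    ring

end Concat

theorem indepSeq_concat_logConcave_of_LCPlus_general {V : Type*} [Fintype V]
    (G : SimpleGraph V) (v w : V) (hvw : G.Adj v w)
    (hG : LCPlus (indepPoly G))
    (hq : ∀ q : ℝ, 0 ≤ q → q ≤ 1 →
      LCPlus (indepPoly G ^ 2 -
        C (4 * q) * X ^ 2 * indepPoly (delNbhd G v) * indepPoly (delNbhd G w)))
    (n : ℕ) :
    ∀ t : ℕ, indepCount (concat G v w n) t * indepCount (concat G v w n) (t + 2) ≤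
      indepCount (concat G v w n) (t + 1) ^ 2 := by
  intro t
  have hLC : LCPlus (indepPoly (concat G v w n)) := by
    rw [indepPoly_concat_eq_eval_dickson G v w hvw, eval_dickson_two_eq_prod]
    refine (hG.pow _).mul (LCPlus.prod fun k _ => ?_)
    convert hq _ (sq_nonneg _) (cos_sq_le_one ((k + 1) * π / (n + 1))) using 1
    rw [smul_eq_C_mul]
    ring
  have hlc := hLC.2 t
  simp only [coeff_indepPoly] at hlc
  exact_mod_cast hlc

/-- Theorem (Galvin–Hilyard, "thm-tech"). If `p(G,x)` is LC⁺ and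
`p(G,x)² - 4qx² p(G-N[v],x) p(G-N[w],x)` is LC⁺ for all `q ∈ [0,1]`, then for every `n ≥ 1`
the independent set sequence of the `n`-concatenation `G^n(v,w)` is log-concave. -/
theorem indepSeq_concat_logConcave_of_LCPlus {V : Type*} [Fintype V]
    (G : SimpleGraph V) (v w : V) (hvw : G.Adj v w)
    (hG : LCPlus (indepPoly G))
    (hq : ∀ q : ℝ, 0 ≤ q → q ≤ 1 →
      LCPlus (indepPoly G ^ 2 -
        C (4 * q) * X ^ 2 * indepPoly (delNbhd G v) * indepPoly (delNbhd G w)))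
    (n : ℕ) (hn : 1 ≤ n) :
    ∀ t : ℕ, indepCount (concat G v w n) t * indepCount (concat G v w n) (t + 2) ≤
      indepCount (concat G v w n) (t + 1) ^ 2 :=
  indepSeq_concat_logConcave_of_LCPlus_general G v w hvw hG hq n
end

section
/- Let G be a finite simple graph and v a vertex of G. For n ≥ 1 let G^1_n be the graph obtained from G by attaching n pendant edges at v (i.e., adding n new vertices each adjacent only to v). Then there exists N (depending on G) such that for all n ≥ N, the independent set sequence of G^1_n is unimodal. -/
open Finset Polynomial
open scoped Classical

/-- `attachAt G v n` (the graph `G¹ₙ`) is obtained from `G` by attaching `n` pendant edges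
at the vertex `v`: the new vertices are adjacent only to `v`. -/
def attachAt {V : Type*} (G : SimpleGraph V) (v : V) (n : ℕ) : SimpleGraph (V ⊕ Fin n) :=
  SimpleGraph.fromRel (fun p q =>
    (∃ a b : V, p = Sum.inl a ∧ q = Sum.inl b ∧ G.Adj a b) ∨
    (∃ i : Fin n, p = Sum.inl v ∧ q = Sum.inr i))

lemma choose_step_up (n j : ℕ) (h : 2*j+1 ≤ n) : n.choose j ≤ n.choose (j+1) := by
  have key := Nat.choose_succ_right_eq n j
  have h1 : n.choose j * (j+1) ≤ n.choose (j+1) * (j+1) := by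
    rw [key]; exact Nat.mul_le_mul_left _ (by omega)
  exact Nat.le_of_mul_le_mul_right h1 (by omega)

lemma choose_step_down (n j : ℕ) (h : n ≤ 2*j+1) : n.choose (j+1) ≤ n.choose j := by
  have key := Nat.choose_succ_right_eq n j
  have h1 : n.choose (j+1) * (j+1) ≤ n.choose j * (j+1) := by
    rw [key]; exact Nat.mul_le_mul_left _ (by omega)
  exact Nat.le_of_mul_le_mul_right h1 (by omega)

lemma choose_concave (n j a : ℕ) (h1 : n ≤ 2*j + 2*a) (h2 : 2*j ≤ n + 2*a)
    (h3 : 8*a*a + 20*a + 4 ≤ n) :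
    n.choose j + n.choose (j+2) ≤ 2 * n.choose (j+1) := by
  obtain ⟨e, he⟩ : ∃ e, n = j + e + 2 := ⟨n - j - 2, by omega⟩
  have k1 := Nat.choose_succ_right_eq n j
  have k2 := Nat.choose_succ_right_eq n (j+1)
  have hnj : n - j = e + 2 := by omega
  have hnj1 : n - (j+1) = e + 1 := by omega
  rw [hnj] at k1; rw [hnj1] at k2
  have harith : (j+1)*(j+2) + (e+1)*(e+2) ≤ 2*(e+2)*(j+2) := by
    have hje1 : e + 2 ≤ j + 2*a := by omega
    have hje2 : j ≤ e + 2 + 2*a := by omega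
    have hj : 4*a*a + 8*a ≤ j := by nlinarith
    zify at *
    nlinarith [sq_nonneg ((j:ℤ) - e - 2)]
  have hmul : (n.choose j + n.choose (j+2)) * ((e+2)*(j+2))
      ≤ (2 * n.choose (j+1)) * ((e+2)*(j+2)) := by
    have e1 : n.choose j * ((e+2)*(j+2)) = n.choose (j+1) * ((j+1)*(j+2)) := by
      rw [show n.choose (j+1) * ((j+1)*(j+2)) = n.choose (j+1) * (j+1) * (j+2) by ring, k1]
      ring
    have e2 : n.choose (j+2) * ((e+2)*(j+2)) = n.choose (j+1) * ((e+1)*(e+2)) := by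
      rw [show n.choose (j+2) * ((e+2)*(j+2)) = n.choose (j+2) * (j+1+1) * (e+2) by ring, k2]
      ring
    rw [add_mul, e1, e2, ← Nat.mul_add]
    calc n.choose (j+1) * ((j+1)*(j+2) + (e+1)*(e+2))
        ≤ n.choose (j+1) * (2*(e+2)*(j+2)) := Nat.mul_le_mul_left _ harith
      _ = 2 * n.choose (j+1) * ((e+2)*(j+2)) := by ring
  exact Nat.le_of_mul_le_mul_right hmul (by positivity)

lemma unimodal_of_steps (a : ℕ → ℕ) (M : ℕ) (h1 : ∀ t, t < M → a t ≤ a (t+1))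
    (h2 : ∀ t, M ≤ t → a (t+1) ≤ a t) : UnimodalNat a := by
  refine ⟨M, ?_, ?_⟩
  · intro i j hij hjM
    induction j, hij using Nat.le_induction with
    | base => exact le_refl _
    | succ j hij ih => exact le_trans (ih (by omega)) (h1 j (by omega))
  · intro i j hMi hij
    induction j, hij using Nat.le_induction with
    | base => exact le_refl _
    | succ j hij ih => exact le_trans (h2 j (by omega)) ih

lemma abstract_unimodal (m : ℕ) (c b : ℕ → ℕ) (hc0 : c 0 = 1)
    (hb0 : ∀ t, m < t → b t = 0) (hbB : ∀ t, b t ≤ 2^m) :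
    ∃ N : ℕ, ∀ n : ℕ, N ≤ n →
      UnimodalNat (fun t =>
        (∑ k ∈ range (m+1), c k * (if k ≤ t then n.choose (t-k) else 0)) + b t) := by
  refine ⟨8*(m+1)*(m+1) + 20*(m+1) + (m+1)*2^m + 4*m + 10, ?_⟩
  intro n hn
  set i : ℕ → ℕ := fun t =>
      (∑ k ∈ range (m+1), c k * (if k ≤ t then n.choose (t-k) else 0)) + b t with hidef
  have hP : 1 ≤ 2^m := Nat.one_le_two_pow
  have hn3 : 4*m + 10 ≤ n := by nlinarith
  have hn4 : 8*(m+1)*(m+1) + 20*(m+1) + 4 ≤ n := by nlinarith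
  have hnQ : (m+1)*2^m + 4*m + 10 ≤ n := by nlinarith
  -- increasing steps
  have hup : ∀ t, 2*t+1 ≤ n → i t ≤ i (t+1) := by
    intro t ht
    have hg : ∀ k, (if k ≤ t then n.choose (t-k) else 0)
        ≤ (if k ≤ t+1 then n.choose (t+1-k) else 0) := by
      intro k
      by_cases hk : k ≤ t
      · rw [if_pos hk, if_pos (by omega)]
        have e : t+1-k = (t-k)+1 := by omega
        rw [e]
        exact choose_step_up n (t-k) (by omega)
      · rw [if_neg hk]
        exact Nat.zero_le _
    by_cases htm : m < t
    · rw [hidef]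
      simp only
      rw [hb0 t htm, hb0 (t+1) (by omega)]
      gcongr with k hk
      exact hg k
    · push_neg at htm
      have hbt : b t ≤ 2^m := hbB t
      have hkey : n.choose t + 2^m ≤ n.choose (t+1) := by
        have h1 : t ≤ n := by omega
        have key := Nat.choose_succ_right_eq n t
        obtain ⟨w, hw1, hw2⟩ : ∃ w, n - t = (t+1) + w ∧ (m+1)*2^m ≤ w :=
          ⟨n - 2*t - 1, by omega, by omega⟩
        have hC1 : 0 < n.choose t := Nat.choose_pos h1
        have hmul : (n.choose t + 2^m)*(t+1) ≤ n.choose (t+1)*(t+1) := by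
          have hstep : 2^m*(t+1) ≤ n.choose t * w := by
            calc 2^m*(t+1) ≤ 2^m*(m+1) := Nat.mul_le_mul_left _ (by omega)
              _ = (m+1)*2^m := by ring
              _ ≤ w := hw2
              _ ≤ n.choose t * w := Nat.le_mul_of_pos_left _ hC1
          calc (n.choose t + 2^m)*(t+1) = n.choose t*(t+1) + 2^m*(t+1) := by ring
            _ ≤ n.choose t*(t+1) + n.choose t * w := by omega
            _ = n.choose t * (n - t) := by rw [hw1]; ring
            _ = n.choose (t+1)*(t+1) := key.symm
        exact Nat.le_of_mul_le_mul_right hmul (by omega)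
      rw [hidef]
      simp only
      rw [Finset.sum_range_succ' (fun k => c k * (if k ≤ t then n.choose (t-k) else 0)) m,
        Finset.sum_range_succ' (fun k => c k * (if k ≤ t+1 then n.choose (t+1-k) else 0)) m]
      simp only [hc0, one_mul, Nat.zero_le, if_true, Nat.sub_zero]
      have hsum : (∑ k ∈ range m, c (k+1) * (if k+1 ≤ t then n.choose (t-(k+1)) else 0))
          ≤ ∑ k ∈ range m, c (k+1) * (if k+1 ≤ t+1 then n.choose (t+1-(k+1)) else 0) := by
        apply Finset.sum_le_sum
        intro k _
        exact Nat.mul_le_mul_left _ (hg (k+1))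
      have hbt1 : b (t+1) ≥ 0 := Nat.zero_le _
      omega
  -- decreasing steps
  have hdown : ∀ t, n + 2*m ≤ 2*t + 1 → i (t+1) ≤ i t := by
    intro t ht
    have htm : m < t := by omega
    rw [hidef]
    simp only
    rw [hb0 t htm, hb0 (t+1) (by omega)]
    gcongr with k hk
    rw [Finset.mem_range] at hk
    have hkt : k ≤ t := by omega
    rw [if_pos hkt, if_pos (show k ≤ t+1 by omega)]
    have e : t+1-k = (t-k)+1 := by omega
    rw [e]
    exact choose_step_down n (t-k) (by omega)
  -- concavity in the middle
  have hconc : ∀ t, m+1 ≤ t → n ≤ 2*t+2 → 2*t ≤ n+2*(m+1) →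
      i t + i (t+2) ≤ 2 * i (t+1) := by
    intro t h1 h2 h3
    rw [hidef]
    simp only
    rw [hb0 t (by omega), hb0 (t+1) (by omega), hb0 (t+2) (by omega)]
    simp only [add_zero]
    rw [← Finset.sum_add_distrib, Finset.mul_sum]
    apply Finset.sum_le_sum
    intro k hk
    rw [Finset.mem_range] at hk
    have hkm : k ≤ m := by omega
    have hkt : k ≤ t := by omega
    rw [if_pos hkt, if_pos (show k ≤ t+1 by omega), if_pos (show k ≤ t+2 by omega)]
    have e1 : t+1-k = (t-k)+1 := by omega
    have e2 : t+2-k = (t-k)+2 := by omega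
    rw [e1, e2, ← Nat.mul_add,
      show 2*(c k * n.choose ((t-k)+1)) = c k * (2 * n.choose ((t-k)+1)) by ring]
    exact Nat.mul_le_mul_left _
      (choose_concave n (t-k) (m+1) (by omega) (by omega) hn4)
  -- assemble
  set d : ℕ → ℤ := fun t => (i (t+1) : ℤ) - (i t : ℤ) with hd
  set L : ℕ := n/2 with hL
  set R : ℕ := L + m + 1 with hR
  have hLm : m + 1 ≤ L := by omega
  have hdle : ∀ s, L ≤ s → s < R → d (s+1) ≤ d s := by
    intro s hs1 hs2
    have hcc := hconc s (by omega) (by omega) (by omega)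
    simp only [hd]
    rw [show s+1+1 = s+2 from rfl]
    push_cast
    omega
  set F : Finset ℕ := (range (R+1)).filter (fun t => d t < 0) with hF
  obtain ⟨M, hM1, hM2, hM3⟩ :
      ∃ M, M ≤ R + 1 ∧ (∀ t, t ≤ R → t < M → 0 ≤ d t) ∧ (M ≤ R → d M < 0) := by
    by_cases hFne : F.Nonempty
    · refine ⟨F.min' hFne, ?_, ?_, ?_⟩
      · have h2 := Finset.mem_filter.mp (F.min'_mem hFne)
        have := Finset.mem_range.mp h2.1
        omega
      · intro t htR htM
        by_contra hc
        push_neg at hc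
        have htF : t ∈ F := by
          rw [hF, Finset.mem_filter, Finset.mem_range]
          exact ⟨by omega, hc⟩
        have := F.min'_le t htF
        omega
      · intro _
        exact (Finset.mem_filter.mp (F.min'_mem hFne)).2
    · refine ⟨R+1, le_refl _, ?_, ?_⟩
      · intro t htR _
        by_contra hc
        push_neg at hc
        exact hFne ⟨t, by rw [hF, Finset.mem_filter, Finset.mem_range]; exact ⟨by omega, hc⟩⟩
      · intro h
        omega
  have claim1 : ∀ t, t < M → 0 ≤ d t := by
    intro t ht
    by_cases hc : 2*t+1 ≤ n
    · have := hup t hc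
      simp only [hd]
      omega
    · exact hM2 t (by omega) ht
  have claim2 : ∀ t, M ≤ t → d t ≤ 0 := by
    intro t ht
    have hdownd : ∀ s, R + 1 ≤ s → d s ≤ 0 := by
      intro s hs
      have := hdown s (by omega)
      simp only [hd]
      omega
    by_cases htR : t ≤ R
    · have hdM : d M < 0 := hM3 (by omega)
      have hML : L ≤ M := by
        by_contra hcc
        push_neg at hcc
        have := hup M (by omega)
        simp only [hd] at hdM
        omega
      have key : ∀ s, M ≤ s → s ≤ R → d s ≤ d M := by
        intro s hs
        induction s, hs using Nat.le_induction with
        | base => intro _; exact le_refl _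
        | succ s hs ih =>
          intro hsR
          exact le_trans (hdle s (by omega) (by omega)) (ih (by omega))
      have := key t ht htR
      omega
    · exact hdownd t (by omega)
  apply unimodal_of_steps _ M
  · intro t ht
    have h0 := claim1 t ht
    simp only [hd] at h0
    have : (i t : ℤ) ≤ (i (t+1) : ℤ) := by omega
    exact_mod_cast this
  · intro t ht
    have h0 := claim2 t ht
    simp only [hd] at h0
    have : (i (t+1) : ℤ) ≤ (i t : ℤ) := by omega
    exact_mod_cast this

section AA
variable {V : Type*} (G : SimpleGraph V) (v : V) {n : ℕ}

lemma attachAt_adj_inl_inl (a b : V) :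
    (attachAt G v n).Adj (Sum.inl a) (Sum.inl b) ↔ G.Adj a b := by
  simp only [attachAt, SimpleGraph.fromRel_adj]
  constructor
  · rintro ⟨hne, h | h⟩
    · rcases h with (⟨x, y, hx, hy, hadj⟩ | ⟨i, _, hi⟩)
      · cases hx; cases hy; simpa using hadj
      · simp at hi
    · rcases h with (⟨x, y, hx, hy, hadj⟩ | ⟨i, _, hi⟩)
      · cases hx; cases hy; exact (by simpa using hadj : G.Adj b a).symm
      · simp at hi
  · intro h
    exact ⟨by simpa using h.ne, Or.inl (Or.inl ⟨a, b, rfl, rfl, h⟩)⟩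

lemma attachAt_adj_inl_inr (a : V) (i : Fin n) :
    (attachAt G v n).Adj (Sum.inl a) (Sum.inr i) ↔ a = v := by
  simp only [attachAt, SimpleGraph.fromRel_adj]
  constructor
  · rintro ⟨hne, h | h⟩
    · rcases h with (⟨x, y, _, hy, _⟩ | ⟨j, hx, hy⟩)
      · simp at hy
      · cases hx; rfl
    · rcases h with (⟨x, y, hx, _, _⟩ | ⟨j, hx, _⟩)
      · simp at hx
      · simp at hx
  · rintro rfl
    exact ⟨by simp, Or.inl (Or.inr ⟨i, rfl, rfl⟩)⟩

lemma attachAt_adj_inr_inr (i j : Fin n) :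
    ¬ (attachAt G v n).Adj (Sum.inr i) (Sum.inr j) := by
  simp only [attachAt, SimpleGraph.fromRel_adj]
  rintro ⟨hne, h | h⟩ <;>
    · rcases h with (⟨x, y, hx, _, _⟩ | ⟨k, hx, _⟩) <;> simp at hx

lemma indep_attach_iff (s : Finset (V ⊕ Fin n)) :
    IsIndepFinset (attachAt G v n) s ↔
      IsIndepFinset G s.toLeft ∧ (v ∈ s.toLeft → s.toRight = ∅) := by
  constructor
  · intro h
    refine ⟨?_, ?_⟩
    · intro a ha b hb hadj
      rw [Finset.mem_toLeft] at ha hb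
      exact h _ ha _ hb ((attachAt_adj_inl_inl G v a b).mpr hadj)
    · intro hv
      rw [Finset.mem_toLeft] at hv
      rw [Finset.eq_empty_iff_forall_notMem]
      intro i hi
      rw [Finset.mem_toRight] at hi
      exact h _ hv _ hi ((attachAt_adj_inl_inr G v v i).mpr rfl)
  · rintro ⟨h1, h2⟩ p hp q hq hadj
    match p, q with
    | Sum.inl a, Sum.inl b =>
      exact h1 a (Finset.mem_toLeft.mpr hp) b (Finset.mem_toLeft.mpr hq)
        ((attachAt_adj_inl_inl G v a b).mp hadj)
    | Sum.inl a, Sum.inr i =>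
      have hav : a = v := (attachAt_adj_inl_inr G v a i).mp hadj
      subst hav
      have := h2 (Finset.mem_toLeft.mpr hp)
      rw [Finset.eq_empty_iff_forall_notMem] at this
      exact this i (Finset.mem_toRight.mpr hq)
    | Sum.inr i, Sum.inl a =>
      have hav : a = v := (attachAt_adj_inl_inr G v a i).mp hadj.symm
      subst hav
      have := h2 (Finset.mem_toLeft.mpr hq)
      rw [Finset.eq_empty_iff_forall_notMem] at this
      exact this i (Finset.mem_toRight.mpr hp)
    | Sum.inr i, Sum.inr j =>
      exact attachAt_adj_inr_inr G v i j hadj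

end AA

section Count
variable {V : Type*} [Fintype V] (G : SimpleGraph V) (v : V)

noncomputable def cA (k : ℕ) : ℕ :=
  ((Finset.univ : Finset (Finset V)).filter
    (fun s => IsIndepFinset G s ∧ v ∉ s ∧ s.card = k)).card

noncomputable def cB (t : ℕ) : ℕ :=
  ((Finset.univ : Finset (Finset V)).filter
    (fun s => IsIndepFinset G s ∧ v ∈ s ∧ s.card = t)).card

lemma count_card_sets (n k t : ℕ) :
    ((Finset.univ : Finset (Finset (Fin n))).filter (fun s₂ => k + s₂.card = t)).card
      = if k ≤ t then n.choose (t-k) else 0 := by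
  by_cases hk : k ≤ t
  · rw [if_pos hk]
    have he : (Finset.univ : Finset (Finset (Fin n))).filter (fun s₂ => k + s₂.card = t)
        = Finset.powersetCard (t-k) Finset.univ := by
      ext s₂
      simp only [Finset.mem_filter, Finset.mem_univ, true_and, Finset.mem_powersetCard,
        Finset.subset_univ]
      omega
    rw [he, Finset.card_powersetCard, Finset.card_univ, Fintype.card_fin]
  · rw [if_neg hk]
    rw [Finset.card_eq_zero, Finset.filter_eq_empty_iff]
    intro s₂ _
    omega

lemma count_formula (n t : ℕ) :
    indepCount (attachAt G v n) t =
      (∑ k ∈ range (Fintype.card V + 1),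
        cA G v k * (if k ≤ t then n.choose (t-k) else 0)) + cB G v t := by
  classical
  set P : Finset V × Finset (Fin n) → Prop := fun p =>
    (IsIndepFinset G p.1 ∧ (v ∈ p.1 → p.2 = ∅)) ∧ p.1.card + p.2.card = t with hP
  -- step 1: transport to pairs
  have step1 : indepCount (attachAt G v n) t
      = ((Finset.univ : Finset (Finset V × Finset (Fin n))).filter P).card := by
    rw [indepCount]
    apply Finset.card_bij' (fun s _ => (s.toLeft, s.toRight))
      (fun p _ => p.1.disjSum p.2)
    · intro s _
      exact Finset.toLeft_disjSum_toRight
    · intro p _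
      ext : 1
      · exact Finset.toLeft_disjSum
      · exact Finset.toRight_disjSum
    · intro s hs
      obtain ⟨-, hind, hcard⟩ := Finset.mem_filter.mp hs
      rw [Finset.mem_filter]
      refine ⟨Finset.mem_univ _, ?_⟩
      rw [hP]
      refine ⟨(indep_attach_iff G v s).mp hind, ?_⟩
      simp only
      rw [Finset.card_toLeft_add_card_toRight]
      exact hcard
    · intro p hp
      obtain ⟨-, hPp⟩ := Finset.mem_filter.mp hp
      rw [hP] at hPp
      rw [Finset.mem_filter]
      refine ⟨Finset.mem_univ _, ?_⟩
      constructor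
      · rw [indep_attach_iff]
        rw [Finset.toLeft_disjSum, Finset.toRight_disjSum]
        exact hPp.1
      · rw [Finset.card_disjSum]
        exact hPp.2
  -- step 2: split on v ∈ p.1
  have e1 : ((Finset.univ : Finset (Finset V × Finset (Fin n))).filter
      (fun p => P p ∧ v ∈ p.1))
      = ((Finset.univ : Finset (Finset V × Finset (Fin n))).filter P).filter
        (fun p => v ∈ p.1) := by
    rw [Finset.filter_filter]
  have e2 : ((Finset.univ : Finset (Finset V × Finset (Fin n))).filter
      (fun p => P p ∧ ¬ v ∈ p.1))
      = ((Finset.univ : Finset (Finset V × Finset (Fin n))).filter P).filter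
        (fun p => ¬ v ∈ p.1) := by
    rw [Finset.filter_filter]
  have step2 : ((Finset.univ : Finset (Finset V × Finset (Fin n))).filter
        (fun p => P p ∧ v ∈ p.1)).card
      + ((Finset.univ : Finset (Finset V × Finset (Fin n))).filter
        (fun p => P p ∧ ¬ v ∈ p.1)).card
      = ((Finset.univ : Finset (Finset V × Finset (Fin n))).filter P).card := by
    rw [e1, e2]
    exact Finset.card_filter_add_card_filter_not
      (s := (Finset.univ : Finset (Finset V × Finset (Fin n))).filter P)
      (fun p => v ∈ p.1)
  -- step 3: the v ∈ part is cB t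
  have step3 : ((Finset.univ : Finset (Finset V × Finset (Fin n))).filter
      (fun p => P p ∧ v ∈ p.1)).card = cB G v t := by
    rw [cB]
    refine Finset.card_bij' (fun p _ => p.1) (fun s _ => (s, (∅ : Finset (Fin n))))
      ?_ ?_ ?_ ?_
    · intro p hp
      obtain ⟨-, hPp, hv⟩ := Finset.mem_filter.mp hp
      rw [hP] at hPp
      obtain ⟨⟨hind, himp⟩, hcard⟩ := hPp
      have h2 : p.2 = ∅ := himp hv
      rw [Finset.mem_filter]
      refine ⟨Finset.mem_univ _, hind, hv, ?_⟩
      rw [h2] at hcard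
      simpa using hcard
    · intro s hs
      obtain ⟨-, hind, hv, hcard⟩ := Finset.mem_filter.mp hs
      rw [Finset.mem_filter, hP]
      exact ⟨Finset.mem_univ _, ⟨⟨hind, fun _ => rfl⟩, by simpa using hcard⟩, hv⟩
    · intro p hp
      obtain ⟨-, hPp, hv⟩ := Finset.mem_filter.mp hp
      rw [hP] at hPp
      obtain ⟨⟨hind, himp⟩, hcard⟩ := hPp
      have h2 : p.2 = ∅ := himp hv
      simp [Prod.ext_iff, h2]
    · intro s _
      rfl
  -- step 4: the v ∉ part is the sum
  have step4 : ((Finset.univ : Finset (Finset V × Finset (Fin n))).filter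
      (fun p => P p ∧ ¬ v ∈ p.1)).card
      = ∑ k ∈ range (Fintype.card V + 1),
          cA G v k * (if k ≤ t then n.choose (t-k) else 0) := by
    rw [Finset.card_filter]
    rw [← Finset.univ_product_univ, Finset.sum_product]
    have inner : ∀ s₁ : Finset V,
        (∑ s₂ : Finset (Fin n), if P (s₁, s₂) ∧ ¬ v ∈ s₁ then 1 else 0)
        = if IsIndepFinset G s₁ ∧ ¬ v ∈ s₁
            then (if s₁.card ≤ t then n.choose (t - s₁.card) else 0) else 0 := by
      intro s₁
      by_cases h : IsIndepFinset G s₁ ∧ ¬ v ∈ s₁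
      · rw [if_pos h, ← count_card_sets n s₁.card t, Finset.card_filter]
        apply Finset.sum_congr rfl
        intro s₂ _
        apply if_congr _ rfl rfl
        rw [hP]
        simp only
        constructor
        · rintro ⟨⟨-, hcard⟩, -⟩
          exact hcard
        · intro hcard
          exact ⟨⟨⟨h.1, fun hv => absurd hv h.2⟩, hcard⟩, h.2⟩
      · rw [if_neg h]
        apply Finset.sum_eq_zero
        intro s₂ _
        have hno : ¬ (P (s₁, s₂) ∧ ¬ v ∈ s₁) := by
          rw [hP]
          rintro ⟨⟨⟨hind, -⟩, -⟩, hv⟩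
          exact h ⟨hind, hv⟩
        rw [if_neg hno]
    calc (∑ s₁ : Finset V, ∑ s₂ : Finset (Fin n), if P (s₁, s₂) ∧ ¬ v ∈ s₁ then 1 else 0)
        = ∑ s₁ : Finset V, if IsIndepFinset G s₁ ∧ ¬ v ∈ s₁
            then (if s₁.card ≤ t then n.choose (t - s₁.card) else 0) else 0 :=
          Finset.sum_congr rfl (fun s₁ _ => inner s₁)
      _ = ∑ s₁ ∈ (Finset.univ : Finset (Finset V)).filter
            (fun s => IsIndepFinset G s ∧ ¬ v ∈ s),
            (if s₁.card ≤ t then n.choose (t - s₁.card) else 0) :=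
          (Finset.sum_filter _ _).symm
      _ = ∑ k ∈ range (Fintype.card V + 1),
            ∑ s₁ ∈ ((Finset.univ : Finset (Finset V)).filter
              (fun s => IsIndepFinset G s ∧ ¬ v ∈ s)).filter (fun s => s.card = k),
            (if s₁.card ≤ t then n.choose (t - s₁.card) else 0) := by
          rw [Finset.sum_fiberwise_of_maps_to]
          intro s₁ _
          rw [Finset.mem_range]
          have := Finset.card_le_univ s₁
          omega
      _ = ∑ k ∈ range (Fintype.card V + 1),
            cA G v k * (if k ≤ t then n.choose (t-k) else 0) := by
          apply Finset.sum_congr rfl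
          intro k _
          have hconst : ∀ s₁ ∈ ((Finset.univ : Finset (Finset V)).filter
              (fun s => IsIndepFinset G s ∧ ¬ v ∈ s)).filter (fun s => s.card = k),
              (if s₁.card ≤ t then n.choose (t - s₁.card) else 0)
              = (if k ≤ t then n.choose (t-k) else 0) := by
            intro s₁ hs₁
            rw [Finset.mem_filter] at hs₁
            rw [hs₁.2]
          rw [Finset.sum_congr rfl hconst, Finset.sum_const, smul_eq_mul]
          congr 1
          rw [cA, Finset.filter_filter]
          congr 1
          exact Finset.filter_congr (fun s _ => by tauto)
  omega

lemma cA_zero : cA G v 0 = 1 := by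
  rw [cA]
  have he : ((Finset.univ : Finset (Finset V)).filter
      (fun s => IsIndepFinset G s ∧ v ∉ s ∧ s.card = 0)) = {∅} := by
    ext s
    simp only [Finset.mem_filter, Finset.mem_univ, true_and, Finset.mem_singleton,
      Finset.card_eq_zero]
    constructor
    · rintro ⟨-, -, h⟩
      exact h
    · rintro rfl
      exact ⟨fun a ha => absurd ha (Finset.notMem_empty a), Finset.notMem_empty v, rfl⟩
  rw [he, Finset.card_singleton]

lemma cB_vanish : ∀ t, Fintype.card V < t → cB G v t = 0 := by
  intro t ht
  rw [cB, Finset.card_eq_zero, Finset.filter_eq_empty_iff]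
  intro s _
  rintro ⟨-, -, hcard⟩
  have := Finset.card_le_univ s
  omega

lemma cB_le : ∀ t, cB G v t ≤ 2 ^ Fintype.card V := by
  intro t
  rw [cB]
  calc _ ≤ (Finset.univ : Finset (Finset V)).card := Finset.card_filter_le _ _
    _ = 2 ^ Fintype.card V := by rw [Finset.card_univ, Fintype.card_finset]

end Count


/-- For any finite graph `G`, any vertex `v`, and all sufficiently large `n`, the graph `G¹ₙ`
obtained from `G` by attaching `n` pendant edges at `v` has unimodal independent set
sequence. -/
theorem attachAt_indepSeq_unimodal {V : Type*} [Fintype V] (G : SimpleGraph V) (v : V) :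
    ∃ N : ℕ, ∀ n : ℕ, N ≤ n → UnimodalNat (indepCount (attachAt G v n)) := by
  obtain ⟨N, hN⟩ := abstract_unimodal (Fintype.card V) (cA G v) (cB G v)
    (cA_zero G v) (cB_vanish G v) (cB_le G v)
  refine ⟨N, fun n hn => ?_⟩
  have h := hN n hn
  have heq : indepCount (attachAt G v n) = fun t =>
      (∑ k ∈ range (Fintype.card V + 1),
        cA G v k * (if k ≤ t then n.choose (t-k) else 0)) + cB G v t :=
    funext (fun t => count_formula G v n t)
  rw [heq]
  exact h
end

section
/- For every n ≥ 1 and all nonnegative integers k_1, ..., k_{n-1}, there exists K (depending on n and k_1,...,k_{n-1}) such that for all k_n ≥ K, the (k_1,...,k_n)-caterpillar has unimodal independent set sequence. -/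
open Finset Polynomial
open scoped Classical

/-- The `(k 0, ..., k (n-1))`-caterpillar: a path on the vertices
`Sum.inl 0, ..., Sum.inl (n-1)` with `k i` pendant leaves `Sum.inr ⟨i, t⟩` attached at the
`i`th path vertex. -/
def caterpillar (n : ℕ) (k : Fin n → ℕ) :
    SimpleGraph (Fin n ⊕ Σ i : Fin n, Fin (k i)) :=
  SimpleGraph.fromRel (fun p q =>
    (∃ i j : Fin n, p = Sum.inl i ∧ q = Sum.inl j ∧ (i : ℕ) + 1 = (j : ℕ)) ∨
    (∃ (i : Fin n) (t : Fin (k i)), p = Sum.inl i ∧ q = Sum.inr ⟨i, t⟩))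

/-! Let `G` be the caterpillar with no leaves at the last path vertex `u` and let `N` be the number
of leaves put there. An independent set either contains `u`, and then no new leaf, or is an
independent set of `G` avoiding `u` together with an arbitrary set of new leaves; hence
`i(t) = ∑_{s + r = t} a(s) C(N, r) + b(t)`, where `a(s)` and `b(t)` count the independent sets
of `G` avoiding resp. containing `u`. Both are supported on `[0, d]`, `d = |V(G)|`, and
`a(0) = 1`. For large `N` the sequence increases up to `N / 2` (the growth of `C(N, t)` swamps
the bounded `b`), decreases from `N / 2 + d + 1` on, and is log-concave in between, because
`C(N, m) C(N, m' + 2) + C(N, m') C(N, m + 2) ≤ 2 C(N, m + 1) C(N, m' + 1)` as soon as `m + 1` and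
`m' + 1` lie within `L` of `N / 2` and `2 L² ≤ N`. -/

theorem unimodalNat_of_le_succ_of_succ_le (f : ℕ → ℕ) (T : ℕ) (hup : ∀ t < T, f t ≤ f (t + 1))
    (hdown : ∀ t, T ≤ t → f (t + 1) ≤ f t) : UnimodalNat f := by
  have hmono : MonotoneOn f (Set.Iic T) :=
    monotoneOn_of_le_succ Set.ordConnected_Iic fun t _ _ ht => by
      simp only [Order.succ_eq_add_one, Set.mem_Iic] at ht ⊢
      exact hup t (by omega)
  have hanti : AntitoneOn f (Set.Ici T) :=
    antitoneOn_of_succ_le Set.ordConnected_Ici fun t _ ht _ => hdown t ht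
  exact ⟨T, fun i j hij hjT => hmono (hij.trans hjT) hjT hij,
    fun i j hTi hij => hanti hTi (hTi.trans hij) hij⟩

theorem unimodalNat_of_logConcave_window (f : ℕ → ℕ) (m M : ℕ)
    (hrise : ∀ t < m, f t ≤ f (t + 1))
    (hlc : ∀ t, m ≤ t + 1 → t + 1 < M → f t * f (t + 2) ≤ f (t + 1) ^ 2)
    (hpos : ∀ t ≤ M, 0 < f t) (hfall : ∀ t, M ≤ t → f (t + 1) ≤ f t) : UnimodalNat f := by
  have hex : ∃ t, m ≤ t ∧ (M ≤ t ∨ f (t + 1) < f t) :=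
    ⟨max m M, le_max_left _ _, .inl (le_max_right _ _)⟩
  set T := Nat.find hex
  have hmT : m ≤ T := (Nat.find_spec hex).1
  have hstrict : ∀ t, T ≤ t → t < M → f (t + 1) < f t := by
    intro t hTt htM
    induction t, hTt using Nat.le_induction with
    | base => exact (Nat.find_spec hex).2.resolve_left (by omega)
    | succ t hTt ih =>
      have hdec := ih (by omega)
      have hlc_t := hlc t (by omega) htM
      have hpos_t := hpos (t + 1) (by omega)
      have : f t * f (t + 2) < f t * f (t + 1) := by nlinarith
      exact Nat.lt_of_mul_lt_mul_left this
  refine unimodalNat_of_le_succ_of_succ_le f T (fun t htT => ?_) (fun t hTt => ?_)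
  · by_cases htm : t < m
    · exact hrise t htm
    · have := Nat.find_min hex htT
      simp only [not_and, not_or, not_lt] at this
      exact (this (by omega)).2
  · by_cases htM : M ≤ t
    · exact hfall t htM
    · exact (hstrict t hTt (by omega)).le

theorem choose_succ_le_of_le_two_mul {N r : ℕ} (h : N ≤ 2 * r) :
    N.choose (r + 1) ≤ N.choose r := by
  refine Nat.le_of_mul_le_mul_right ?_ (Nat.succ_pos r)
  rw [Nat.choose_succ_right_eq]
  exact Nat.mul_le_mul_left _ (by omega)

theorem choose_add_le_choose_succ {N t B : ℕ} (h : B * (t + 1) + 2 * t + 1 ≤ N) :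
    N.choose t + B ≤ N.choose (t + 1) := by
  refine Nat.le_of_mul_le_mul_right ?_ (Nat.succ_pos t)
  rw [Nat.choose_succ_right_eq]
  have hpos : 1 ≤ N.choose t := Nat.choose_pos (by omega)
  obtain ⟨e, he⟩ : ∃ e, N - t = t + 1 + B * (t + 1) + e :=
    ⟨N - t - (t + 1 + B * (t + 1)), by omega⟩
  rw [he]
  nlinarith [Nat.mul_le_mul_right (B * (t + 1)) hpos]

-- With `r + q = r' + q' = N`, this is
-- `(r / (q + 1)) (q' / (r' + 1)) + (r' / (q' + 1)) (q / (r + 1)) ≤ 2` with denominators cleared;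
-- the factors are the ratios `C(N, r - 1) / C(N, r)` and `C(N, r + 1) / C(N, r)`.
theorem balanced_split_ratio_sum_le (N L r q r' q' : ℕ) (hrq : r + q = N)
    (hrq' : r' + q' = N) (h₁ : r ≤ q + L) (h₂ : q ≤ r + L) (h₃ : r' ≤ q' + L) (h₄ : q' ≤ r' + L)
    (hN : 2 * L ^ 2 ≤ N) :
    r * q' * ((r + 1) * (q' + 1)) + r' * q * ((r' + 1) * (q + 1)) ≤
      2 * ((q + 1) * (r + 1) * ((q' + 1) * (r' + 1))) := by
  subst hrq
  have hq' : (q' : ℤ) = r + q - r' := by omega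
  zify at *
  have hid : 4 * (2 * ((q + 1) * (r + 1) * ((q' + 1) * (r' + 1))) -
      (r * q' * ((r + 1) * (q' + 1)) + r' * q * ((r' + 1) * (q + 1))) : ℤ) =
      (r + q + 1) * (2 * (r + q + 2) ^ 2 - 2 * (r - q) * (r' - q') -
        (r + q + 2) * ((r' - q') - (r - q)) ^ 2) := by
    rw [hq']; ring
  have huv : ((r : ℤ) - q) * (r' - q') ≤ L ^ 2 := by
    nlinarith [mul_nonneg (by linarith : (0 : ℤ) ≤ L - (r - q))
        (by linarith : (0 : ℤ) ≤ L + (r' - q')),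
      mul_nonneg (by linarith : (0 : ℤ) ≤ L + (r - q)) (by linarith : (0 : ℤ) ≤ L - (r' - q'))]
  have hw : (((r' : ℤ) - q') - (r - q)) ^ 2 ≤ 4 * L ^ 2 := by
    nlinarith [mul_nonneg (by linarith : (0 : ℤ) ≤ 2 * L - ((r' - q') - (r - q)))
      (by linarith : (0 : ℤ) ≤ 2 * L + ((r' - q') - (r - q)))]
  have hbracket : 0 ≤ 2 * ((r : ℤ) + q + 2) ^ 2 - 2 * (r - q) * (r' - q') -
      (r + q + 2) * ((r' - q') - (r - q)) ^ 2 := by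
    nlinarith
  nlinarith [mul_nonneg (by positivity : (0 : ℤ) ≤ r + q + 1) hbracket]

theorem choose_mul_choose_add_choose_mul_choose_le (N L m m' : ℕ)
    (hm₁ : 2 * (m + 1) ≤ N + L) (hm₂ : N ≤ 2 * (m + 1) + L) (hm'₁ : 2 * (m' + 1) ≤ N + L)
    (hm'₂ : N ≤ 2 * (m' + 1) + L) (hN : 2 * L ^ 2 ≤ N) :
    N.choose m * N.choose (m' + 2) + N.choose m' * N.choose (m + 2) ≤
      2 * (N.choose (m + 1) * N.choose (m' + 1)) := by
  have hL : 2 * L ≤ N := by nlinarith [Nat.le_self_pow two_ne_zero L]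
  obtain ⟨q, rfl⟩ : ∃ q, N = m + 1 + q := ⟨N - (m + 1), by omega⟩
  obtain ⟨q', hq'⟩ : ∃ q', m + 1 + q = m' + 1 + q' := ⟨m + 1 + q - (m' + 1), by omega⟩
  set N := m + 1 + q
  have hA : N.choose (m + 1) * (m + 1) = N.choose m * (q + 1) := by
    rw [Nat.choose_succ_right_eq]; congr 1; omega
  have hZ : N.choose (m + 2) * (m + 2) = N.choose (m + 1) * q := by
    rw [Nat.choose_succ_right_eq]; congr 1; omega
  have hA' : N.choose (m' + 1) * (m' + 1) = N.choose m' * (q' + 1) := by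
    rw [Nat.choose_succ_right_eq]; congr 1; omega
  have hZ' : N.choose (m' + 2) * (m' + 2) = N.choose (m' + 1) * q' := by
    rw [Nat.choose_succ_right_eq]; congr 1; omega
  have key := balanced_split_ratio_sum_le N L (m + 1) q (m' + 1) q' rfl hq'.symm
    (by omega) (by omega) (by omega) (by omega) hN
  refine Nat.le_of_mul_le_mul_right ?_
    (by positivity : 0 < (q + 1) * (m + 2) * ((q' + 1) * (m' + 2)))
  calc (N.choose m * N.choose (m' + 2) + N.choose m' * N.choose (m + 2)) *
        ((q + 1) * (m + 2) * ((q' + 1) * (m' + 2)))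
      = N.choose m * (q + 1) * (N.choose (m' + 2) * (m' + 2)) * ((m + 2) * (q' + 1)) +
          N.choose m' * (q' + 1) * (N.choose (m + 2) * (m + 2)) * ((m' + 2) * (q + 1)) := by ring
    _ = N.choose (m + 1) * N.choose (m' + 1) *
          ((m + 1) * q' * ((m + 1 + 1) * (q' + 1)) +
            (m' + 1) * q * ((m' + 1 + 1) * (q + 1))) := by
        rw [← hA, ← hA', hZ, hZ']; ring
    _ ≤ N.choose (m + 1) * N.choose (m' + 1) *
          (2 * ((q + 1) * (m + 1 + 1) * ((q' + 1) * (m' + 1 + 1)))) := Nat.mul_le_mul_left _ key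
    _ = 2 * (N.choose (m + 1) * N.choose (m' + 1)) *
          ((q + 1) * (m + 2) * ((q' + 1) * (m' + 2))) := by ring

theorem sum_mul_sum_le_sq_of_pairwise {ι R : Type*} [CommSemiring R] [LinearOrder R]
    [IsStrictOrderedRing R] (S : Finset ι) (w u m v : ι → R) (hw : ∀ i ∈ S, 0 ≤ w i)
    (h : ∀ i ∈ S, ∀ j ∈ S, u i * v j + u j * v i ≤ 2 * (m i * m j)) :
    (∑ i ∈ S, w i * u i) * (∑ i ∈ S, w i * v i) ≤ (∑ i ∈ S, w i * m i) ^ 2 := by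
  have hsym : 2 * ((∑ i ∈ S, w i * u i) * (∑ i ∈ S, w i * v i)) =
      ∑ i ∈ S, ∑ j ∈ S, w i * w j * (u i * v j + u j * v i) := by
    rw [two_mul]
    conv_lhs => enter [2]; rw [sum_mul_sum, sum_comm]
    rw [sum_mul_sum, ← sum_add_distrib]
    refine sum_congr rfl fun i _ => ?_
    rw [← sum_add_distrib]
    exact sum_congr rfl fun j _ => by ring
  have hsq : 2 * (∑ i ∈ S, w i * m i) ^ 2 =
      ∑ i ∈ S, ∑ j ∈ S, w i * w j * (2 * (m i * m j)) := by
    rw [sq, sum_mul_sum, mul_sum]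
    exact sum_congr rfl fun i _ => by rw [mul_sum]; exact sum_congr rfl fun j _ => by ring
  refine le_of_mul_le_mul_left ?_ (zero_lt_two : (0 : R) < 2)
  rw [hsym, hsq]
  exact sum_le_sum fun i hi => sum_le_sum fun j hj =>
    mul_le_mul_of_nonneg_left (h i hi j hj) (mul_nonneg (hw i hi) (hw j hj))

def cauchyProd (a c : ℕ → ℕ) (t : ℕ) : ℕ :=
  ∑ p ∈ antidiagonal t, a p.1 * c p.2

section CauchyProd

variable (a c : ℕ → ℕ)

theorem cauchyProd_succ (t : ℕ) :
    cauchyProd a c (t + 1) = a (t + 1) * c 0 + ∑ p ∈ antidiagonal t, a p.1 * c (p.2 + 1) :=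
  Nat.sum_antidiagonal_succ'

theorem mul_le_cauchyProd (t : ℕ) : a 0 * c t ≤ cauchyProd a c t :=
  single_le_sum (f := fun p => a p.1 * c p.2) (fun _ _ => Nat.zero_le _)
    (show ((0, t) : ℕ × ℕ) ∈ antidiagonal t from mem_antidiagonal.2 (zero_add t))

theorem cauchyProd_add_le_succ (t : ℕ) (hc : ∀ r ≤ t, c r ≤ c (r + 1)) :
    cauchyProd a c t + a 0 * (c (t + 1) - c t) ≤ cauchyProd a c (t + 1) := by
  have hsplit : ∑ p ∈ antidiagonal t, a p.1 * c (p.2 + 1) =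
      cauchyProd a c t + ∑ p ∈ antidiagonal t, a p.1 * (c (p.2 + 1) - c p.2) := by
    rw [cauchyProd, ← sum_add_distrib]
    refine sum_congr rfl fun p hp => ?_
    rw [← mul_add, Nat.add_sub_cancel' (hc p.2 (by have := mem_antidiagonal.1 hp; omega))]
  have hgap : a 0 * (c (t + 1) - c t) ≤ ∑ p ∈ antidiagonal t, a p.1 * (c (p.2 + 1) - c p.2) :=
    single_le_sum (f := fun p => a p.1 * (c (p.2 + 1) - c p.2)) (fun _ _ => Nat.zero_le _)
      (show ((0, t) : ℕ × ℕ) ∈ antidiagonal t from mem_antidiagonal.2 (zero_add t))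
  rw [cauchyProd_succ, hsplit]
  omega

variable {a} {d : ℕ} (ha : ∀ s, d < s → a s = 0)
include ha

theorem cauchyProd_succ_le {t : ℕ} (hdt : d ≤ t) (hc : ∀ r, t - d ≤ r → c (r + 1) ≤ c r) :
    cauchyProd a c (t + 1) ≤ cauchyProd a c t := by
  rw [cauchyProd_succ, ha (t + 1) (by omega), zero_mul, zero_add]
  refine sum_le_sum fun p hp => ?_
  rcases le_or_gt p.1 d with h | h
  · have := mem_antidiagonal.1 hp
    exact Nat.mul_le_mul_left _ (hc _ (by omega))
  · simp [ha _ h]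

theorem cauchyProd_eq_sum_range {t : ℕ} (hdt : d ≤ t) :
    cauchyProd a c t = ∑ s ∈ range (d + 1), a s * c (t - s) := by
  rw [cauchyProd, Nat.sum_antidiagonal_eq_sum_range_succ_mk]
  refine (sum_subset (range_subset_range.2 (by omega)) fun s _ hs => ?_).symm
  rw [mem_range, not_lt] at hs
  rw [ha s (by omega), zero_mul]

theorem cauchyProd_choose_sq_le {N L t : ℕ} (hdt : d ≤ t) (hlo : N ≤ 2 * (t + 1 - d) + L)
    (hhi : 2 * (t + 1) ≤ N + L) (hN : 2 * L ^ 2 ≤ N) :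
    cauchyProd a N.choose t * cauchyProd a N.choose (t + 2) ≤
      cauchyProd a N.choose (t + 1) ^ 2 := by
  have hshift : ∀ k, ∑ s ∈ range (d + 1), a s * N.choose (t + k - s) =
      ∑ s ∈ range (d + 1), a s * N.choose (t - s + k) := fun k =>
    sum_congr rfl fun s hs => by rw [mem_range] at hs; rw [Nat.sub_add_comm (by omega)]
  rw [cauchyProd_eq_sum_range _ ha hdt, cauchyProd_eq_sum_range _ ha (by omega : d ≤ t + 1),
    cauchyProd_eq_sum_range _ ha (by omega : d ≤ t + 2), hshift, hshift]
  refine sum_mul_sum_le_sq_of_pairwise _ a _ _ _ (fun _ _ => Nat.zero_le _) fun s hs s' hs' => ?_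
  rw [mem_range] at hs hs'
  exact choose_mul_choose_add_choose_mul_choose_le N L (t - s) (t - s') (by omega) (by omega)
    (by omega) (by omega) hN

end CauchyProd

theorem exists_unimodalNat_cauchyProd_choose_add (a b : ℕ → ℕ) (d : ℕ) (ha₀ : 0 < a 0)
    (ha : ∀ s, d < s → a s = 0) (hb : ∀ t, d < t → b t = 0) :
    ∃ K, ∀ N : ℕ, K ≤ N → UnimodalNat (fun t => cauchyProd a N.choose t + b t) := by
  set B := ∑ t ∈ range (d + 1), b t
  have hbB : ∀ t, b t ≤ B := fun t => by
    rcases le_or_gt t d with h | h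
    · exact single_le_sum (fun _ _ => Nat.zero_le _) (mem_range.2 (by omega))
    · simp [hb t h]
  refine ⟨2 * (2 * d + 1) ^ 2 + B * (d + 1) + 2 * d + 4, fun N hN => ?_⟩
  have hL : 2 * (2 * d + 1) ^ 2 ≤ N := by omega
  have hB : B * (d + 1) + 2 * d + 1 ≤ N := by omega
  apply unimodalNat_of_logConcave_window _ (N / 2) (N / 2 + d + 1)
  · intro t ht
    have hstep := cauchyProd_add_le_succ a N.choose t fun r hr =>
      Nat.choose_le_succ_of_lt_half_left (by omega)
    rcases le_or_gt t d with htd | htd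
    · have hgap : B ≤ N.choose (t + 1) - N.choose t := by
        have := choose_add_le_choose_succ (N := N) (t := t) (B := B)
          (by nlinarith [Nat.mul_le_mul_left B htd])
        omega
      have := Nat.le_mul_of_pos_left (N.choose (t + 1) - N.choose t) ha₀
      have := hbB t
      omega
    · rw [hb t htd, hb (t + 1) (by omega)]
      omega
  · intro t h₁ h₂
    simp only [hb t (by omega), hb (t + 1) (by omega), hb (t + 2) (by omega), add_zero]
    exact cauchyProd_choose_sq_le ha (L := 2 * d + 1) (by omega) (by omega) (by omega) hL
  · intro t ht
    have := mul_le_cauchyProd a N.choose t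
    have := Nat.mul_pos ha₀ (Nat.choose_pos (by omega : t ≤ N))
    omega
  · intro t ht
    simp only [hb t (by omega), hb (t + 1) (by omega), add_zero]
    exact cauchyProd_succ_le _ ha (by omega) fun r hr => choose_succ_le_of_le_two_mul (by omega)

section Pendants

variable {V : Type*}

theorem indepCount_eq_of_iso {W : Type*} [Fintype V] [Fintype W] {G : SimpleGraph V}
    {H : SimpleGraph W} (e : G ≃g H) : indepCount G = indepCount H := by
  funext t
  refine card_equiv (Equiv.finsetCongr e.toEquiv) fun s => ?_
  simp only [mem_filter, mem_univ, true_and, Equiv.finsetCongr_apply, card_map]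
  simp only [IsIndepFinset, forall_mem_map]
  simp [e.map_adj_iff]

def addPendants (G : SimpleGraph V) (u : V) (N : ℕ) : SimpleGraph (V ⊕ Fin N) where
  Adj
    | .inl a, .inl b => G.Adj a b
    | .inl a, .inr _ => a = u
    | .inr _, .inl b => b = u
    | .inr _, .inr _ => False
  symm.symm := by
    rintro (a | i) (b | j) h
    exacts [h.symm, h, h, h]
  loopless.irrefl := by
    rintro (a | i) h
    exacts [G.loopless.irrefl a h, h]

theorem isIndepFinset_addPendants_disjSum (G : SimpleGraph V) (u : V) (N : ℕ) (J : Finset V)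
    (S : Finset (Fin N)) :
    IsIndepFinset (addPendants G u N) (J.disjSum S) ↔ IsIndepFinset G J ∧ (u ∈ J → S = ∅) := by
  simp only [IsIndepFinset, Sum.forall, inl_mem_disjSum, inr_mem_disjSum, addPendants,
    eq_empty_iff_forall_notMem]
  grind

theorem card_filter_add_eq_sum_antidiagonal {α β : Type*} (s : Finset α) (t : Finset β)
    (f : α → ℕ) (g : β → ℕ) (n : ℕ) :
    #{x ∈ s ×ˢ t | f x.1 + g x.2 = n} =
      ∑ p ∈ antidiagonal n, #{a ∈ s | f a = p.1} * #{b ∈ t | g b = p.2} := by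
  rw [card_eq_sum_card_fiberwise (f := fun x : α × β => (f x.1, g x.2)) (t := antidiagonal n)
    (fun x hx => mem_antidiagonal.2 (mem_filter.1 hx).2)]
  refine sum_congr rfl fun p hp => ?_
  rw [← card_product, ← filter_product]
  congr 1
  ext x
  simp only [mem_filter, mem_product, Prod.ext_iff]
  have := mem_antidiagonal.1 hp
  grind

noncomputable def indepCountMem [Fintype V] (G : SimpleGraph V) (u : V) (t : ℕ) : ℕ :=
  #{s | IsIndepFinset G s ∧ u ∈ s ∧ #s = t}

noncomputable def indepCountNotMem [Fintype V] (G : SimpleGraph V) (u : V) (t : ℕ) : ℕ :=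
  #{s | IsIndepFinset G s ∧ u ∉ s ∧ #s = t}

theorem indepCountNotMem_zero [Fintype V] (G : SimpleGraph V) (u : V) :
    indepCountNotMem G u 0 = 1 := by
  rw [indepCountNotMem, card_eq_one]
  refine ⟨∅, eq_singleton_iff_unique_mem.2 ⟨?_, fun s hs => ?_⟩⟩
  · simp only [mem_filter, mem_univ, true_and, notMem_empty, not_false_eq_true, card_empty,
      and_true]
    exact fun a ha => absurd ha (notMem_empty a)
  · simp only [mem_filter, mem_univ, true_and] at hs
    exact card_eq_zero.1 hs.2.2

theorem indepCountNotMem_eq_zero [Fintype V] (G : SimpleGraph V) (u : V) {t : ℕ}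
    (ht : Fintype.card V < t) : indepCountNotMem G u t = 0 := by
  refine card_eq_zero.2 (filter_eq_empty_iff.2 fun s _ hs => ?_)
  have := card_le_univ s
  omega

theorem indepCountMem_eq_zero [Fintype V] (G : SimpleGraph V) (u : V) {t : ℕ}
    (ht : Fintype.card V < t) : indepCountMem G u t = 0 := by
  refine card_eq_zero.2 (filter_eq_empty_iff.2 fun s _ hs => ?_)
  have := card_le_univ s
  omega

theorem indepCount_addPendants [Fintype V] (G : SimpleGraph V) (u : V) (N t : ℕ) :
    indepCount (addPendants G u N) t =
      cauchyProd (indepCountNotMem G u) N.choose t + indepCountMem G u t := by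
  have hpairs : indepCount (addPendants G u N) t =
      #{x : Finset V × Finset (Fin N) | IsIndepFinset G x.1 ∧ (u ∈ x.1 → x.2 = ∅) ∧
        #x.1 + #x.2 = t} := by
    refine card_equiv Finset.sumEquiv.toEquiv fun s => ?_
    conv_lhs => rw [← Finset.toLeft_disjSum_toRight (u := s)]
    simp only [mem_filter, mem_univ, true_and, isIndepFinset_addPendants_disjSum, card_disjSum]
    simp [and_assoc]
  have hnotMem : #{x : Finset V × Finset (Fin N) | (IsIndepFinset G x.1 ∧ u ∉ x.1) ∧
      #x.1 + #x.2 = t} = cauchyProd (indepCountNotMem G u) N.choose t := by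
    have hprod : ({x | (IsIndepFinset G x.1 ∧ u ∉ x.1) ∧ #x.1 + #x.2 = t} :
        Finset (Finset V × Finset (Fin N))) =
        {x ∈ ({J | IsIndepFinset G J ∧ u ∉ J} : Finset (Finset V)) ×ˢ
          (univ : Finset (Finset (Fin N))) | #x.1 + #x.2 = t} := by
      ext x; simp
    rw [hprod, card_filter_add_eq_sum_antidiagonal]
    refine sum_congr rfl fun p _ => ?_
    simp only [filter_filter, indepCountNotMem, and_assoc]
    simp
  have hMem : #{x : Finset V × Finset (Fin N) | IsIndepFinset G x.1 ∧ u ∈ x.1 ∧ x.2 = ∅ ∧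
      #x.1 = t} = indepCountMem G u t := by
    refine card_nbij' Prod.fst (fun s => (s, ∅)) ?_ ?_ ?_ ?_ <;> intro x <;>
      simp +contextual [Prod.ext_iff]
  rw [hpairs, ← card_filter_add_card_filter_not (fun x => u ∉ x.1), filter_filter, filter_filter,
    ← hnotMem, ← hMem]
  congr 2 <;> ext x <;> grind

end Pendants

section Caterpillar

variable {n : ℕ} (κ : Fin n → ℕ) (j : Fin n)

def pendantsToCaterpillar :
    (Fin n ⊕ Σ i, Fin (Function.update κ j 0 i)) ⊕ Fin (κ j) → Fin n ⊕ Σ i, Fin (κ i)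
  | .inl (.inl i) => .inl i
  | .inl (.inr ⟨i, t⟩) => .inr ⟨i, Fin.castLE (update_le_self_iff.2 (Nat.zero_le _) i) t⟩
  | .inr t => .inr ⟨j, t⟩

theorem pendantsToCaterpillar_bijective : Function.Bijective (pendantsToCaterpillar κ j) := by
  constructor
  · rintro ((a | ⟨a, s⟩) | s) ((b | ⟨b, t⟩) | t) h <;>
      simp only [pendantsToCaterpillar, Sum.inl.injEq, Sum.inr.injEq, reduceCtorEq,
        Sigma.mk.inj_iff] at h ⊢
    · exact h
    · obtain ⟨rfl, h⟩ := h
      exact ⟨rfl, heq_of_eq (Fin.castLE_injective _ (eq_of_heq h))⟩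
    · obtain ⟨rfl, -⟩ := h
      simpa using s.2
    · obtain ⟨rfl, -⟩ := h
      simpa using t.2
    · exact eq_of_heq h.2
  · rintro (i | ⟨i, t⟩)
    · exact ⟨.inl (.inl i), rfl⟩
    by_cases h : i = j
    · subst h; exact ⟨.inr t, rfl⟩
    · exact ⟨.inl (.inr ⟨i, ⟨t, by simp [h]⟩⟩), rfl⟩

theorem exists_sigma_fin_mk_eq {ι : Type*} {κ : ι → ℕ} {a b : ι} (y : Fin (κ b)) :
    (∃ x : Fin (κ a), (⟨b, y⟩ : Σ i, Fin (κ i)) = ⟨a, x⟩) ↔ b = a :=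
  ⟨fun ⟨_, h⟩ => congrArg Sigma.fst h, by rintro rfl; exact ⟨y, rfl⟩⟩

theorem caterpillar_adj_pendantsToCaterpillar (x y) :
    (caterpillar n κ).Adj (pendantsToCaterpillar κ j x) (pendantsToCaterpillar κ j y) ↔
      (addPendants (caterpillar n (Function.update κ j 0)) (.inl j) (κ j)).Adj x y := by
  rcases x with ((a | ⟨a, s⟩) | s) <;> rcases y with ((b | ⟨b, t⟩) | t) <;>
    simp [caterpillar, addPendants, pendantsToCaterpillar, -Sigma.mk.injEq,
      exists_sigma_fin_mk_eq] <;>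
    exact eq_comm

noncomputable def caterpillarIsoAddPendants :
    addPendants (caterpillar n (Function.update κ j 0)) (.inl j) (κ j) ≃g caterpillar n κ :=
  ⟨Equiv.ofBijective _ (pendantsToCaterpillar_bijective κ j),
    caterpillar_adj_pendantsToCaterpillar κ j _ _⟩

theorem indepCount_caterpillar (t : ℕ) :
    indepCount (caterpillar n κ) t =
      cauchyProd (indepCountNotMem (caterpillar n (Function.update κ j 0)) (.inl j)) (κ j).choose t
        + indepCountMem (caterpillar n (Function.update κ j 0)) (.inl j) t := by
  rw [← indepCount_eq_of_iso (caterpillarIsoAddPendants κ j), indepCount_addPendants]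

end Caterpillar

/-- For every `n ≥ 1` and all `k_1, ..., k_{n-1}`, if the number `kn` of pendant edges at the
last path vertex is sufficiently large, the resulting caterpillar has unimodal independent
set sequence.  Here the path has `n + 1` vertices, `k` prescribes the pendant counts at the
first `n` vertices, and the count at the last vertex is replaced by `kn`. -/
theorem caterpillar_indepSeq_unimodal (n : ℕ) (k : Fin (n + 1) → ℕ) :
    ∃ K : ℕ, ∀ kn : ℕ, K ≤ kn →
      UnimodalNat (indepCount (caterpillar (n + 1) (Function.update k (Fin.last n) kn))) := by
  set G := caterpillar (n + 1) (Function.update k (Fin.last n) 0)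
  obtain ⟨K, hK⟩ := exists_unimodalNat_cauchyProd_choose_add
    (indepCountNotMem G (.inl (Fin.last n))) (indepCountMem G (.inl (Fin.last n))) _
    (by rw [indepCountNotMem_zero]; exact one_pos)
    (fun _ => indepCountNotMem_eq_zero G _) (fun _ => indepCountMem_eq_zero G _)
  refine ⟨K, fun kn hkn => ?_⟩
  have hdecomp := indepCount_caterpillar (Function.update k (Fin.last n) kn) (Fin.last n)
  rw [Function.update_idem, Function.update_self] at hdecomp
  rw [funext hdecomp]
  exact hK kn hkn
end

section
/- Let G be a finite simple graph with adjacent vertices v and w, and for n ≥ 0 let p_n(x) denote the independence polynomial of the n-concatenation G^n(v,w) (with p_0(x) = 1). Then p_1(x) = p(G,x), and for all n ≥ 2, p_n(x) = p(G,x) · p_{n-1}(x) - x^2 · p(G - N[v], x) · p(G - N[w], x) · p_{n-2}(x). -/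
set_option linter.unusedSectionVars false


open Finset Polynomial
open scoped Classical

section Aux
variable {V : Type*} (G : SimpleGraph V) (v w : V)

lemma indep_concat_iff (n : ℕ) (s : Finset (V × Fin n)) :
    IsIndepFinset (concat G v w n) s ↔
      (∀ (i : Fin n) (a b : V), (a, i) ∈ s → (b, i) ∈ s → ¬ G.Adj a b) ∧
      (∀ i j : Fin n, (i : ℕ) + 1 = (j : ℕ) → (w, i) ∈ s → (v, j) ∉ s) := by
  constructor
  · intro h
    refine ⟨fun i a b ha hb hadj => ?_, fun i j hij hw hv => ?_⟩
    · exact h _ ha _ hb (by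
        rw [concat, SimpleGraph.fromRel_adj]
        exact ⟨by simp [hadj.ne], Or.inl (Or.inl ⟨rfl, hadj⟩)⟩)
    · have hne : ((w, i) : V × Fin n) ≠ (v, j) := by
        intro hc
        have h2' : (i : ℕ) = (j : ℕ) := congrArg (fun p : V × Fin n => (p.2 : ℕ)) hc
        omega
      have hadj : (concat G v w n).Adj (w, i) (v, j) := by
        rw [concat, SimpleGraph.fromRel_adj]
        exact ⟨hne, Or.inl (Or.inr ⟨rfl, rfl, hij⟩)⟩
      exact h _ hw _ hv hadj
  · rintro ⟨h1, h2⟩ ⟨a, i⟩ ha ⟨b, j⟩ hb hadj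
    rw [concat, SimpleGraph.fromRel_adj] at hadj
    obtain ⟨-, hrel⟩ := hadj
    rcases hrel with (⟨hij, hG⟩ | ⟨haw, hbv, hsum⟩) | (⟨hij, hG⟩ | ⟨hbw, hav, hsum⟩)
    · simp only at hij hG; subst hij; exact h1 _ a b ha hb hG
    · simp only at haw hbv hsum; subst haw; subst hbv; exact h2 i j hsum ha hb
    · simp only at hij hG; subst hij; exact h1 _ b a hb ha hG
    · simp only at hbw hav hsum; subst hbw; subst hav; exact h2 j i hsum hb ha

lemma indSets_zero :
    (Finset.univ.filter fun s : Finset (V × Fin 0) => IsIndepFinset (concat G v w 0) s)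
      = {∅} := by
  apply Finset.eq_singleton_iff_unique_mem.mpr
  constructor
  · simp only [mem_filter, mem_univ, true_and]
    intro a ha; exact absurd ha (notMem_empty a)
  · intro s _; exact Finset.eq_empty_of_isEmpty s

lemma sum_indep_mem {α : Type*} [Fintype α] (H : SimpleGraph α) (u : α) :
    ∑ s ∈ Finset.univ.filter (fun s => IsIndepFinset H s ∧ u ∈ s), (X : ℝ[X]) ^ s.card
      = X * indepPoly (delNbhd H u) := by
  rw [indepPoly, Finset.mul_sum]
  refine Finset.sum_nbij' (i := fun s => Finset.univ.filter (fun x : {x : α // ¬ (x = u ∨ H.Adj u x)} => (x : α) ∈ s))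
    (j := fun t => insert u (t.image Subtype.val)) ?_ ?_ ?_ ?_ ?_
  · intro s hs
    simp only [mem_filter, mem_univ, true_and] at hs ⊢
    intro a ha b hb
    simp only [mem_filter, mem_univ, true_and] at ha hb
    exact hs.1 _ ha _ hb
  · intro t ht
    simp only [mem_filter, mem_univ, true_and] at ht ⊢
    refine ⟨?_, mem_insert_self u _⟩
    intro a ha b hb hadj
    rcases mem_insert.mp ha with rfl | ha'
    · rcases mem_insert.mp hb with rfl | hb'
      · exact H.irrefl hadj
      · obtain ⟨b', hb', rfl⟩ := mem_image.mp hb'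
        exact b'.2 (Or.inr hadj)
    · obtain ⟨a2, ha2, rfl⟩ := mem_image.mp ha'
      rcases mem_insert.mp hb with rfl | hb'
      · exact a2.2 (Or.inr hadj.symm)
      · obtain ⟨b2, hb2, rfl⟩ := mem_image.mp hb'
        exact ht _ ha2 _ hb2 hadj
  · intro s hs
    simp only [mem_filter, mem_univ, true_and] at hs
    ext x
    simp only [mem_insert, mem_image, mem_filter, mem_univ, true_and]
    constructor
    · rintro (rfl | ⟨a, ha, rfl⟩)
      · exact hs.2
      · exact ha
    · intro hx
      by_cases hxu : x = u ∨ H.Adj u x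
      · rcases hxu with rfl | hadj
        · exact Or.inl rfl
        · exact absurd hadj (hs.1 _ hs.2 _ hx)
      · exact Or.inr ⟨⟨x, hxu⟩, hx, rfl⟩
  · intro t ht
    ext x
    simp only [mem_filter, mem_univ, true_and, mem_insert, mem_image]
    constructor
    · rintro (h | ⟨a, ha, h⟩)
      · exact absurd (Or.inl h) x.2
      · rwa [show a = x from Subtype.ext h] at ha
    · intro hx; exact Or.inr ⟨x, hx, rfl⟩
  · intro s hs
    simp only [mem_filter, mem_univ, true_and] at hs
    have hcard : s.card = (Finset.univ.filter (fun x : {x : α // ¬ (x = u ∨ H.Adj u x)} => (x : α) ∈ s)).card + 1 := by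
      have h1 : s = insert u ((Finset.univ.filter (fun x : {x : α // ¬ (x = u ∨ H.Adj u x)} => (x : α) ∈ s)).image Subtype.val) := by
        ext x
        simp only [mem_insert, mem_image, mem_filter, mem_univ, true_and]
        constructor
        · intro hx
          by_cases hxu : x = u ∨ H.Adj u x
          · rcases hxu with rfl | hadj
            · exact Or.inl rfl
            · exact absurd hadj (hs.1 _ hs.2 _ hx)
          · exact Or.inr ⟨⟨x, hxu⟩, hx, rfl⟩
        · rintro (rfl | ⟨a, ha, rfl⟩)
          · exact hs.2
          · exact ha
      conv_lhs => rw [h1]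
      rw [Finset.card_insert_of_notMem, Finset.card_image_of_injective _ Subtype.val_injective]
      intro hmem
      obtain ⟨a, -, h⟩ := mem_image.mp hmem
      exact a.2 (Or.inl h)
    rw [hcard, pow_succ]
    ring
end Aux

section Split
variable {V : Type*} [Fintype V]

noncomputable def topS (m : ℕ) (s : Finset (V × Fin (m+1))) : Finset V :=
  Finset.univ.filter fun a => (a, Fin.last m) ∈ s

noncomputable def lowS (m : ℕ) (s : Finset (V × Fin (m+1))) : Finset (V × Fin m) :=
  Finset.univ.filter fun p => (p.1, Fin.castSucc p.2) ∈ s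

noncomputable def glue (m : ℕ) (s₁ : Finset (V × Fin m)) (s₂ : Finset V) : Finset (V × Fin (m+1)) :=
  s₁.image (fun p => (p.1, Fin.castSucc p.2)) ∪ s₂.image (fun a => (a, Fin.last m))

lemma mem_glue_castSucc (m : ℕ) (s₁ : Finset (V × Fin m)) (s₂ : Finset V) (a : V) (i : Fin m) :
    (a, i.castSucc) ∈ glue m s₁ s₂ ↔ (a, i) ∈ s₁ := by
  rw [glue, mem_union]
  constructor
  · rintro (h | h)
    · obtain ⟨p, hp, heq⟩ := mem_image.mp h
      obtain ⟨h1, h2⟩ := Prod.mk.injEq .. ▸ heq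
      rw [Fin.castSucc_inj] at h2
      rw [← h1, ← h2]; exact hp
    · obtain ⟨b, hb, heq⟩ := mem_image.mp h
      exact absurd (congrArg Prod.snd heq) (Fin.castSucc_lt_last i).ne'
  · intro h
    exact Or.inl (mem_image.mpr ⟨(a, i), h, rfl⟩)

lemma mem_glue_last (m : ℕ) (s₁ : Finset (V × Fin m)) (s₂ : Finset V) (a : V) :
    (a, Fin.last m) ∈ glue m s₁ s₂ ↔ a ∈ s₂ := by
  rw [glue, mem_union]
  constructor
  · rintro (h | h)
    · obtain ⟨p, hp, heq⟩ := mem_image.mp h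
      exact absurd (congrArg Prod.snd heq) (Fin.castSucc_lt_last p.2).ne
    · obtain ⟨b, hb, heq⟩ := mem_image.mp h
      have hba : b = a := congrArg Prod.fst heq
      rwa [← hba]
  · intro h
    exact Or.inr (mem_image.mpr ⟨a, h, rfl⟩)

lemma lowS_glue (m : ℕ) (s₁ : Finset (V × Fin m)) (s₂ : Finset V) :
    lowS m (glue m s₁ s₂) = s₁ := by
  ext ⟨a, i⟩
  simp only [lowS, mem_filter, mem_univ, true_and]
  exact mem_glue_castSucc m s₁ s₂ a i

lemma topS_glue (m : ℕ) (s₁ : Finset (V × Fin m)) (s₂ : Finset V) :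
    topS m (glue m s₁ s₂) = s₂ := by
  ext a
  simp only [topS, mem_filter, mem_univ, true_and]
  exact mem_glue_last m s₁ s₂ a

lemma glue_lowS_topS (m : ℕ) (s : Finset (V × Fin (m+1))) :
    glue m (lowS m s) (topS m s) = s := by
  ext ⟨a, i⟩
  induction i using Fin.lastCases with
  | last =>
    rw [mem_glue_last]
    simp [topS]
  | cast i =>
    rw [mem_glue_castSucc]
    simp [lowS]

lemma card_glue (m : ℕ) (s₁ : Finset (V × Fin m)) (s₂ : Finset V) :
    (glue m s₁ s₂).card = s₁.card + s₂.card := by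
  rw [glue, Finset.card_union_of_disjoint, Finset.card_image_of_injective,
    Finset.card_image_of_injective]
  · intro x y h
    exact (Prod.mk.injEq .. ▸ h).1
  · intro p q h
    obtain ⟨h1, h2⟩ := Prod.mk.injEq .. ▸ h
    rw [Fin.castSucc_inj] at h2
    exact Prod.ext h1 h2
  · rw [Finset.disjoint_left]
    intro x hx hy
    obtain ⟨p, -, rfl⟩ := mem_image.mp hx
    obtain ⟨b, -, heq⟩ := mem_image.mp hy
    exact (Fin.castSucc_lt_last p.2).ne' (congrArg Prod.snd heq)

lemma indep_glue_iff (G : SimpleGraph V) (v w : V) (m : ℕ)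
    (s₁ : Finset (V × Fin m)) (s₂ : Finset V) :
    IsIndepFinset (concat G v w (m+1)) (glue m s₁ s₂) ↔
      IsIndepFinset (concat G v w m) s₁ ∧ IsIndepFinset G s₂ ∧
      (∀ i : Fin m, (i : ℕ) + 1 = m → (w, i) ∈ s₁ → v ∉ s₂) := by
  rw [indep_concat_iff, indep_concat_iff]
  constructor
  · rintro ⟨h1, h2⟩
    refine ⟨⟨?_, ?_⟩, ?_, ?_⟩
    · intro i a b ha hb
      exact h1 i.castSucc a b ((mem_glue_castSucc m s₁ s₂ a i).mpr ha)
        ((mem_glue_castSucc m s₁ s₂ b i).mpr hb)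
    · intro i j hij hw2 hv2
      exact h2 i.castSucc j.castSucc (by simpa using hij)
        ((mem_glue_castSucc m s₁ s₂ w i).mpr hw2)
        ((mem_glue_castSucc m s₁ s₂ v j).mpr hv2)
    · intro a ha b hb
      exact h1 (Fin.last m) a b ((mem_glue_last m s₁ s₂ a).mpr ha)
        ((mem_glue_last m s₁ s₂ b).mpr hb)
    · intro i hi hw2 hv2
      exact h2 i.castSucc (Fin.last m) (by simpa using hi)
        ((mem_glue_castSucc m s₁ s₂ w i).mpr hw2)
        ((mem_glue_last m s₁ s₂ v).mpr hv2)
  · rintro ⟨⟨h1, h2⟩, hG, hcross⟩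
    constructor
    · intro i a b ha hb
      induction i using Fin.lastCases with
      | last =>
        exact hG a ((mem_glue_last m s₁ s₂ a).mp ha) b ((mem_glue_last m s₁ s₂ b).mp hb)
      | cast i =>
        exact h1 i a b ((mem_glue_castSucc m s₁ s₂ a i).mp ha)
          ((mem_glue_castSucc m s₁ s₂ b i).mp hb)
    · intro i j hij hw2
      induction j using Fin.lastCases with
      | last =>
        induction i using Fin.lastCases with
        | last => simp at hij
        | cast i =>
          rw [mem_glue_last]
          rw [mem_glue_castSucc] at hw2
          exact hcross i (by simpa using hij) hw2
      | cast j =>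
        rw [mem_glue_castSucc]
        induction i using Fin.lastCases with
        | last =>
          exfalso
          have hj : (j : ℕ) < m := j.is_lt
          simp only [Fin.val_last, Fin.coe_castSucc] at hij
          omega
        | cast i =>
          rw [mem_glue_castSucc] at hw2
          exact h2 i j (by simpa using hij) hw2

lemma split_sum (G : SimpleGraph V) (v w : V) (m : ℕ) (R : Finset V → Prop) :
    ∑ s ∈ Finset.univ.filter
        (fun s => IsIndepFinset (concat G v w (m+1)) s ∧ R (topS m s)),
      (X : ℝ[X]) ^ s.card
    = ∑ p ∈ (((Finset.univ : Finset (Finset (V × Fin m))).filter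
            (fun s₁ => IsIndepFinset (concat G v w m) s₁)) ×ˢ
          ((Finset.univ : Finset (Finset V)).filter
            (fun s₂ => IsIndepFinset G s₂ ∧ R s₂))).filter
          (fun p => ∀ i : Fin m, (i : ℕ) + 1 = m → (w, i) ∈ p.1 → v ∉ p.2),
        (X : ℝ[X]) ^ (p.1.card + p.2.card) := by
  refine Finset.sum_nbij' (i := fun s => (lowS m s, topS m s))
    (j := fun p => glue m p.1 p.2) ?_ ?_ ?_ ?_ ?_
  · intro s hs
    simp only [mem_filter, mem_univ, true_and, mem_product] at hs ⊢
    obtain ⟨hind, hR⟩ := hs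
    rw [← glue_lowS_topS m s] at hind
    obtain ⟨ha, hb, hc⟩ := (indep_glue_iff G v w m _ _).mp hind
    exact ⟨⟨ha, hb, hR⟩, hc⟩
  · intro p hp
    simp only [mem_filter, mem_univ, true_and, mem_product] at hp ⊢
    obtain ⟨⟨h1, h2, hR⟩, hc⟩ := hp
    refine ⟨(indep_glue_iff G v w m _ _).mpr ⟨h1, h2, hc⟩, ?_⟩
    rwa [topS_glue]
  · intro s _
    exact glue_lowS_topS m s
  · intro p _
    simp [lowS_glue, topS_glue]
  · intro s _
    have h : s.card = (lowS m s).card + (topS m s).card := by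
      conv_lhs => rw [← glue_lowS_topS m s]
      rw [card_glue]
    rw [h]
end Split


section Assemble
variable {V : Type*} [Fintype V]

lemma sum_setcongr_trans {α : Type*} {s t : Finset α} {f : α → ℝ[X]} {c : ℝ[X]}
    (hst : ∀ x, x ∈ s ↔ x ∈ t) (h : ∑ a ∈ t, f a = c) : ∑ a ∈ s, f a = c := by
  rw [Finset.ext_iff.mpr hst]; exact h

lemma sum_pair_pow {ι κ : Type*} (A : Finset (Finset ι)) (B : Finset (Finset κ)) :
    ∑ p ∈ A ×ˢ B, (X : ℝ[X]) ^ (p.1.card + p.2.card)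
      = (∑ a ∈ A, (X : ℝ[X]) ^ a.card) * ∑ b ∈ B, (X : ℝ[X]) ^ b.card := by
  rw [Finset.sum_product, Finset.sum_mul_sum]
  exact Finset.sum_congr rfl fun a _ => Finset.sum_congr rfl fun b _ => pow_add _ _ _

lemma sum_empty_type {α : Type*} [Fintype α] [IsEmpty α] (P : Finset α → Prop) (hP : P ∅) :
    ∑ s ∈ Finset.univ.filter (fun s => P s), (X : ℝ[X]) ^ s.card = 1 := by
  rw [Finset.sum_eq_single_of_mem ∅ (Finset.mem_filter.mpr ⟨Finset.mem_univ _, hP⟩)]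
  · simp
  · intro b _ hb
    exact absurd (Finset.eq_empty_of_isEmpty b) hb

lemma part_one (G : SimpleGraph V) (v w : V) :
    indepPoly (concat G v w (0+1)) = indepPoly G := by
  have h := split_sum G v w 0 (fun _ => True)
  rw [indepPoly]
  refine sum_setcongr_trans ?_ (h.trans ?_)
  · intro s; simp
  · refine sum_setcongr_trans
      (t := (Finset.univ.filter (fun s₁ : Finset (V × Fin 0) => IsIndepFinset (concat G v w 0) s₁)) ×ˢ
        (Finset.univ.filter (fun s₂ : Finset V => IsIndepFinset G s₂))) ?_ ?_
    · intro p
      simp only [Finset.mem_filter, Finset.mem_product, Finset.mem_univ, true_and, and_true]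
      constructor
      · rintro ⟨hp, -⟩; exact hp
      · intro hp; exact ⟨hp, fun i => i.elim0⟩
    · rw [sum_pair_pow,
        sum_empty_type (fun s => IsIndepFinset (concat G v w 0) s)
          (fun a ha => absurd ha (Finset.notMem_empty a)), one_mul, indepPoly]

lemma Lsucc (G : SimpleGraph V) (v w : V) (hvw : G.Adj v w) (m : ℕ) :
    ∑ s ∈ Finset.univ.filter
        (fun s => IsIndepFinset (concat G v w (m+1)) s ∧ (w, Fin.last m) ∈ s),
      (X : ℝ[X]) ^ s.card
    = X * indepPoly (delNbhd G w) * indepPoly (concat G v w m) := by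
  have h := split_sum G v w m (fun s₂ => w ∈ s₂)
  refine sum_setcongr_trans ?_ (h.trans ?_)
  · intro s; simp [topS]
  · refine sum_setcongr_trans
      (t := (Finset.univ.filter (fun s₁ : Finset (V × Fin m) => IsIndepFinset (concat G v w m) s₁)) ×ˢ
        (Finset.univ.filter (fun s₂ : Finset V => IsIndepFinset G s₂ ∧ w ∈ s₂))) ?_ ?_
    · intro p
      simp only [Finset.mem_filter, Finset.mem_product, Finset.mem_univ, true_and]
      constructor
      · rintro ⟨⟨h1, h2⟩, -⟩; exact ⟨h1, h2⟩
      · rintro ⟨h1, h2⟩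
        refine ⟨⟨h1, h2⟩, ?_⟩
        intro i hi hw2 hv2
        exact h2.1 v hv2 w h2.2 hvw
    · rw [sum_pair_pow, sum_indep_mem,
        show (∑ a ∈ Finset.univ.filter (fun s₁ : Finset (V × Fin m) =>
            IsIndepFinset (concat G v w m) s₁), (X : ℝ[X]) ^ a.card)
          = indepPoly (concat G v w m) from rfl]
      ring

lemma key_step (G : SimpleGraph V) (v w : V) (hvw : G.Adj v w) (m : ℕ) :
    indepPoly (concat G v w (m+1+1)) =
      indepPoly G * indepPoly (concat G v w (m+1)) -
        X ^ 2 * indepPoly (delNbhd G v) * indepPoly (delNbhd G w) *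
          indepPoly (concat G v w m) := by
  have h := split_sum G v w (m+1) (fun _ => True)
  rw [indepPoly]
  refine sum_setcongr_trans ?_ (h.trans ?_)
  · intro s; simp
  · refine sum_setcongr_trans
      (t := ((Finset.univ.filter (fun s₁ : Finset (V × Fin (m+1)) =>
              IsIndepFinset (concat G v w (m+1)) s₁)) ×ˢ
            (Finset.univ.filter (fun s₂ : Finset V => IsIndepFinset G s₂))).filter
          (fun p => ¬ ((w, Fin.last m) ∈ p.1 ∧ v ∈ p.2))) ?_ ?_
    · intro p
      simp only [Finset.mem_filter, Finset.mem_product, Finset.mem_univ, true_and, and_true]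
      constructor
      · rintro ⟨hp, hc⟩
        refine ⟨hp, ?_⟩
        rintro ⟨hw2, hv2⟩
        exact hc (Fin.last m) (by simp) hw2 hv2
      · rintro ⟨hp, hc⟩
        refine ⟨hp, ?_⟩
        intro i hi hw2 hv2
        have hil : i = Fin.last m := Fin.ext (by simpa using hi)
        exact hc ⟨hil ▸ hw2, hv2⟩
    · have hsplit := Finset.sum_filter_add_sum_filter_not
        ((Finset.univ.filter (fun s₁ : Finset (V × Fin (m+1)) =>
            IsIndepFinset (concat G v w (m+1)) s₁)) ×ˢ
          (Finset.univ.filter (fun s₂ : Finset V => IsIndepFinset G s₂)))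
        (fun p => (w, Fin.last m) ∈ p.1 ∧ v ∈ p.2)
        (fun p => (X : ℝ[X]) ^ (p.1.card + p.2.card))
      have htot : ∑ p ∈ ((Finset.univ.filter (fun s₁ : Finset (V × Fin (m+1)) =>
              IsIndepFinset (concat G v w (m+1)) s₁)) ×ˢ
            (Finset.univ.filter (fun s₂ : Finset V => IsIndepFinset G s₂))),
            (X : ℝ[X]) ^ (p.1.card + p.2.card)
          = indepPoly (concat G v w (m+1)) * indepPoly G := by
        rw [sum_pair_pow, indepPoly, indepPoly]
      have hbad : ∑ p ∈ (((Finset.univ.filter (fun s₁ : Finset (V × Fin (m+1)) =>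
              IsIndepFinset (concat G v w (m+1)) s₁)) ×ˢ
            (Finset.univ.filter (fun s₂ : Finset V => IsIndepFinset G s₂))).filter
            (fun p => (w, Fin.last m) ∈ p.1 ∧ v ∈ p.2)),
            (X : ℝ[X]) ^ (p.1.card + p.2.card)
          = (X * indepPoly (delNbhd G w) * indepPoly (concat G v w m)) *
            (X * indepPoly (delNbhd G v)) := by
        rw [Finset.filter_product (fun s₁ => (w, Fin.last m) ∈ s₁) (fun s₂ => v ∈ s₂),
          sum_pair_pow, Finset.filter_filter, Finset.filter_filter,
          Lsucc G v w hvw m, sum_indep_mem]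
      have hgood := hsplit
      rw [htot, hbad] at hgood
      have : ∑ p ∈ (((Finset.univ.filter (fun s₁ : Finset (V × Fin (m+1)) =>
              IsIndepFinset (concat G v w (m+1)) s₁)) ×ˢ
            (Finset.univ.filter (fun s₂ : Finset V => IsIndepFinset G s₂))).filter
            (fun p => ¬ ((w, Fin.last m) ∈ p.1 ∧ v ∈ p.2))),
            (X : ℝ[X]) ^ (p.1.card + p.2.card)
          = indepPoly (concat G v w (m+1)) * indepPoly G -
            (X * indepPoly (delNbhd G w) * indepPoly (concat G v w m)) *
              (X * indepPoly (delNbhd G v)) := by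
        rw [← hgood]
        ring
      rw [this]
      ring
end Assemble



/-- The recurrence for the independence polynomials `pₙ` of the concatenations `G^n(v,w)`:
`p₁ = p(G,x)` and `pₙ = p(G,x)·p_{n-1} - x²·p(G-N[v],x)·p(G-N[w],x)·p_{n-2}` for `n ≥ 2`
(here `p₀ = 1`, the independence polynomial of the empty graph `G^0(v,w)`). -/
theorem indepPoly_concat_recurrence {V : Type*} [Fintype V]
    (G : SimpleGraph V) (v w : V) (hvw : G.Adj v w) :
    indepPoly (concat G v w 1) = indepPoly G ∧
    ∀ n : ℕ, 2 ≤ n →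
      indepPoly (concat G v w n) =
        indepPoly G * indepPoly (concat G v w (n - 1)) -
          X ^ 2 * indepPoly (delNbhd G v) * indepPoly (delNbhd G w) *
            indepPoly (concat G v w (n - 2)) := by
  refine ⟨part_one G v w, ?_⟩
  intro n hn
  obtain ⟨k, rfl⟩ : ∃ k, n = k + 2 := ⟨n - 2, by omega⟩
  exact key_step G v w hvw k
end

section
/- Suppose the polynomial f(x) = Σ_{i=0}^m b_i x^i is LC+, a is an integer with 0 ≤ a ≤ m+1, and A > 0 is a real number. If both b_{a+1}^2 ≥ b_{a+2}(b_a + A) and b_{a-1}^2 ≥ (b_a + A) b_{a-2} hold (with the convention b_i = 0 for i outside {0,...,m}, so that relations involving such indices hold vacuously when both sides vanish appropriately), then f(x) + A x^a is LC+. -/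
open Polynomial

/-- The coefficient of a real polynomial at an integer index, with value `0` at negative
indices (the convention `b_i = 0` for `i` outside `{0, ..., m}`). -/
noncomputable def coeffZ (f : Polynomial ℝ) (i : ℤ) : ℝ :=
  if 0 ≤ i then f.coeff i.toNat else 0

lemma coeffZ_natCast (f : Polynomial ℝ) (n : ℕ) : coeffZ f (n : ℤ) = f.coeff n := by
  simp [coeffZ]

/-- Perturbing an LC⁺ polynomial by adding `A·xᵃ` with `A > 0` preserves LC⁺-ness, provided
the two log-concavity relations adjacent to position `a` hold for the perturbed
coefficients. -/
theorem LCPlus_add_pos_monomial (f : Polynomial ℝ) (hf : LCPlus f)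
    (a : ℕ) (ha : a ≤ f.natDegree + 1) (A : ℝ) (hA : 0 < A)
    (h1 : coeffZ f ((a : ℤ) + 2) * (coeffZ f (a : ℤ) + A) ≤ coeffZ f ((a : ℤ) + 1) ^ 2)
    (h2 : (coeffZ f (a : ℤ) + A) * coeffZ f ((a : ℤ) - 2) ≤ coeffZ f ((a : ℤ) - 1) ^ 2) :
    LCPlus (f + C A * X ^ a) := by
  have hc : ∀ i, (f + C A * X ^ a).coeff i = f.coeff i + (if i = a then A else 0) := by
    intro i
    simp [coeff_X_pow, mul_ite]
  have hnn : ∀ i, 0 ≤ f.coeff i := by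
    intro i
    rcases le_or_gt i f.natDegree with h | h
    · exact (hf.1 i h).le
    · simp [coeff_eq_zero_of_natDegree_lt h]
  have hdeg : (f + C A * X ^ a).natDegree ≤ max f.natDegree a :=
    (natDegree_add_le _ _).trans (max_le_max le_rfl (natDegree_C_mul_X_pow_le A a))
  have e0 : coeffZ f (a : ℤ) = f.coeff a := coeffZ_natCast f a
  have e1 : coeffZ f ((a : ℤ) + 1) = f.coeff (a + 1) := by
    rw [show ((a : ℤ) + 1) = ((a + 1 : ℕ) : ℤ) by push_cast; ring, coeffZ_natCast]
  have e2 : coeffZ f ((a : ℤ) + 2) = f.coeff (a + 2) := by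
    rw [show ((a : ℤ) + 2) = ((a + 2 : ℕ) : ℤ) by push_cast; ring, coeffZ_natCast]
  constructor
  · intro i hi
    rw [hc]
    rcases le_or_gt i f.natDegree with h | h
    · have h0 := hf.1 i h
      have : (0 : ℝ) ≤ if i = a then A else 0 := by
        split <;> [exact hA.le; exact le_rfl]
      linarith
    · have hi' : i ≤ max f.natDegree a := hi.trans hdeg
      have hia : i = a := by omega
      subst hia
      rw [coeff_eq_zero_of_natDegree_lt h, if_pos rfl]
      linarith
  · intro k
    rw [hc, hc, hc]
    have hlc := hf.2 k
    by_cases hka : a = k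
    · subst hka
      rw [if_pos rfl, if_neg (by omega), if_neg (by omega)]
      rw [e0, e1, e2] at h1
      nlinarith [hnn (a + 2)]
    · by_cases hka1 : a = k + 1
      · subst hka1
        rw [if_neg (show ¬(k = k + 1) by omega), if_neg (show ¬(k + 2 = k + 1) by omega),
          if_pos rfl]
        nlinarith [hnn (k + 1), hA.le]
      · by_cases hka2 : a = k + 2
        · subst hka2
          rw [if_neg (show ¬(k = k + 2) by omega), if_pos rfl,
            if_neg (show ¬(k + 1 = k + 2) by omega)]
          have em2 : coeffZ f (((k + 2 : ℕ) : ℤ) - 2) = f.coeff k := by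
            rw [show ((k + 2 : ℕ) : ℤ) - 2 = ((k : ℕ) : ℤ) by push_cast; ring, coeffZ_natCast]
          have em1 : coeffZ f (((k + 2 : ℕ) : ℤ) - 1) = f.coeff (k + 1) := by
            rw [show ((k + 2 : ℕ) : ℤ) - 1 = ((k + 1 : ℕ) : ℤ) by push_cast; ring, coeffZ_natCast]
          rw [e0, em2, em1] at h2
          nlinarith [hnn k]
        · rw [if_neg (fun h => hka h.symm), if_neg (fun h => hka2 h.symm),
            if_neg (fun h => hka1 h.symm)]
          simpa using hlc
end

section
/- For all integers ℓ1, ℓ2 ≥ 0, the polynomial (1+x)^{ℓ1+ℓ2} + x(1+x)^{ℓ2} + x(1+x)^{ℓ1} (the independence polynomial of the double star S_{ℓ1,ℓ2}) is LC+. -/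
open Polynomial

/-! ### Auxiliary lemmas -/

/-- Lagrange-style (2×2 Cauchy–Binet) identity. -/
lemma lagrange_id (N : ℕ) (a b c d : ℕ → ℝ) :
    (∑ i ∈ Finset.range N, a i * c i) * (∑ i ∈ Finset.range N, b i * d i)
      - (∑ i ∈ Finset.range N, a i * d i) * (∑ i ∈ Finset.range N, b i * c i)
    = ∑ j ∈ Finset.range N, ∑ i ∈ Finset.range j,
        (a i * b j - a j * b i) * (c i * d j - c j * d i) := by
  induction N with
  | zero => simp
  | succ n ih =>
    have inner : ∑ i ∈ Finset.range n, (a i * b n - a n * b i) * (c i * d n - c n * d i)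
        = (∑ i ∈ Finset.range n, a i * c i) * (b n * d n)
          - (∑ i ∈ Finset.range n, a i * d i) * (b n * c n)
          - (∑ i ∈ Finset.range n, b i * c i) * (a n * d n)
          + (∑ i ∈ Finset.range n, b i * d i) * (a n * c n) := by
      rw [Finset.sum_mul, Finset.sum_mul, Finset.sum_mul, Finset.sum_mul,
        ← Finset.sum_sub_distrib, ← Finset.sum_sub_distrib, ← Finset.sum_add_distrib]
      exact Finset.sum_congr rfl fun i _ => by ring
    rw [Finset.sum_range_succ, Finset.sum_range_succ, Finset.sum_range_succ,
      Finset.sum_range_succ, Finset.sum_range_succ, inner, ← ih]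
    ring

/-- Chained ratio inequality for nonnegative log-concave sequences without internal zeros. -/
lemma lc_chain (u : ℕ → ℝ) (h0 : ∀ k, 0 ≤ u k)
    (hlc : ∀ k, u k * u (k + 2) ≤ u (k + 1) ^ 2)
    (hz : ∀ k, u k = 0 → u (k + 1) = 0) :
    ∀ i j, i ≤ j → u i * u (j + 1) ≤ u (i + 1) * u j := by
  intro i j hij
  induction j, hij using Nat.le_induction with
  | base => exact (mul_comm (u i) (u (i + 1))).le
  | succ j hij ih =>
    rcases eq_or_lt_of_le (h0 j) with hj | hj
    · have h1 : u (j + 1) = 0 := hz j hj.symm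
      have h2 : u (j + 1 + 1) = 0 := hz (j + 1) h1
      rw [h2, mul_zero]
      exact mul_nonneg (h0 _) (h0 _)
    · have key : u j * (u i * u (j + 1 + 1)) ≤ u j * (u (i + 1) * u (j + 1)) := by
        calc u j * (u i * u (j + 1 + 1)) = u i * (u j * u (j + 2)) := by ring
          _ ≤ u i * u (j + 1) ^ 2 := mul_le_mul_of_nonneg_left (hlc j) (h0 i)
          _ = (u i * u (j + 1)) * u (j + 1) := by ring
          _ ≤ (u (i + 1) * u j) * u (j + 1) := mul_le_mul_of_nonneg_right ih (h0 _)
          _ = u j * (u (i + 1) * u (j + 1)) := by ring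
      exact le_of_mul_le_mul_left key hj

/-- Log-concavity of the convolution of two nonnegative log-concave sequences with no
internal zeros. -/
lemma conv_lc (u v : ℕ → ℝ) (hu0 : ∀ k, 0 ≤ u k) (hv0 : ∀ k, 0 ≤ v k)
    (hulc : ∀ k, u k * u (k + 2) ≤ u (k + 1) ^ 2)
    (hvlc : ∀ k, v k * v (k + 2) ≤ v (k + 1) ^ 2)
    (huz : ∀ k, u k = 0 → u (k + 1) = 0)
    (hvz : ∀ k, v k = 0 → v (k + 1) = 0) (k : ℕ) :
    (∑ i ∈ Finset.range (k + 1), u i * v (k - i)) *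
      (∑ i ∈ Finset.range (k + 3), u i * v (k + 2 - i))
    ≤ (∑ i ∈ Finset.range (k + 2), u i * v (k + 1 - i)) ^ 2 := by
  set b : ℕ → ℝ := fun i => if i = 0 then 0 else u (i - 1) with hb
  set c : ℕ → ℝ := fun i => if i ≤ k + 1 then v (k + 1 - i) else 0 with hc
  set d : ℕ → ℝ := fun i => v (k + 2 - i) with hd
  have hbnn : ∀ i, 0 ≤ b i := by
    intro i; rw [hb]; dsimp only; split <;> [exact le_rfl; exact hu0 _]
  have hcnn : ∀ i, 0 ≤ c i := by
    intro i; rw [hc]; dsimp only; split <;> [exact hv0 _; exact le_rfl]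
  have Sac : ∑ i ∈ Finset.range (k + 3), u i * c i
      = ∑ i ∈ Finset.range (k + 2), u i * v (k + 1 - i) := by
    rw [Finset.sum_range_succ]
    rw [hc]; dsimp only
    rw [if_neg (by omega), mul_zero, add_zero]
    refine Finset.sum_congr rfl fun i hi => ?_
    rw [if_pos (by have := Finset.mem_range.mp hi; omega)]
  have Sbd : ∑ i ∈ Finset.range (k + 3), b i * d i
      = ∑ i ∈ Finset.range (k + 2), u i * v (k + 1 - i) := by
    rw [Finset.sum_range_succ']
    rw [hb, hd]; dsimp only
    rw [if_pos rfl, zero_mul, add_zero]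
    refine Finset.sum_congr rfl fun i hi => ?_
    rw [if_neg (by omega)]
    have e1 : i + 1 - 1 = i := by omega
    have e2 : k + 2 - (i + 1) = k + 1 - i := by omega
    rw [e1, e2]
  have Sad : ∑ i ∈ Finset.range (k + 3), u i * d i
      = ∑ i ∈ Finset.range (k + 3), u i * v (k + 2 - i) := rfl
  have Sbc : ∑ i ∈ Finset.range (k + 3), b i * c i
      = ∑ i ∈ Finset.range (k + 1), u i * v (k - i) := by
    rw [Finset.sum_range_succ']
    rw [hb, hc]; dsimp only
    rw [if_pos rfl, zero_mul, add_zero, Finset.sum_range_succ]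
    rw [if_neg (by omega), if_neg (by omega), mul_zero, add_zero]
    refine Finset.sum_congr rfl fun i hi => ?_
    have hi' := Finset.mem_range.mp hi
    rw [if_neg (by omega), if_pos (by omega)]
    congr 2 <;> omega
  have L := lagrange_id (k + 3) u b c d
  rw [Sac, Sbd, Sad, Sbc] at L
  have hnn : 0 ≤ ∑ j ∈ Finset.range (k + 3), ∑ i ∈ Finset.range j,
      (u i * b j - u j * b i) * (c i * d j - c j * d i) := by
    refine Finset.sum_nonneg fun j hj => Finset.sum_nonneg fun i hi => ?_
    have hij : i < j := Finset.mem_range.mp hi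
    have hjN : j < k + 3 := Finset.mem_range.mp hj
    refine mul_nonneg ?_ ?_
    · rcases Nat.eq_zero_or_pos i with rfl | hipos
      · rw [hb]; dsimp only
        rw [if_pos rfl, mul_zero, sub_zero]
        exact mul_nonneg (hu0 _) (hbnn _)
      · obtain ⟨m, rfl⟩ : ∃ m, i = m + 1 := ⟨i - 1, by omega⟩
        obtain ⟨jj, rfl⟩ : ∃ jj, j = jj + 1 := ⟨j - 1, by omega⟩
        rw [hb]; dsimp only
        rw [if_neg (by omega), if_neg (by omega)]
        simp only [Nat.add_sub_cancel]
        have := lc_chain u hu0 hulc huz m jj (by omega)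
        linarith
    · by_cases hjk : j ≤ k + 1
      · rw [hc, hd]; dsimp only
        rw [if_pos hjk, if_pos (by omega)]
        obtain ⟨s, hs⟩ : ∃ s, k + 1 - j = s := ⟨k + 1 - j, rfl⟩
        obtain ⟨t, ht⟩ : ∃ t, k + 1 - i = t := ⟨k + 1 - i, rfl⟩
        have h1 : k + 2 - j = s + 1 := by omega
        have h2 : k + 2 - i = t + 1 := by omega
        rw [hs, ht, h1, h2]
        have := lc_chain v hv0 hvlc hvz s t (by omega)
        linarith
      · have hcj : c j = 0 := by rw [hc]; dsimp only; rw [if_neg hjk]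
        rw [hcj, zero_mul, sub_zero]
        have hdj : 0 ≤ d j := hv0 _
        exact mul_nonneg (hcnn _) hdj
  rw [sq]
  nlinarith [L, hnn]

/-- Natural-number log-concavity of binomial coefficients. -/
lemma choose_lc_nat (n k : ℕ) : n.choose k * n.choose (k + 2) ≤ n.choose (k + 1) ^ 2 := by
  by_cases h : n ≤ k + 1
  · rw [Nat.choose_eq_zero_of_lt (show n < k + 2 by omega), mul_zero]
    exact Nat.zero_le _
  · push_neg at h
    have h1 := Nat.choose_succ_right_eq n k
    have h2 := Nat.choose_succ_right_eq n (k + 1)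
    have hpos : 0 < (n - k) * (k + 2) := Nat.mul_pos (by omega) (by omega)
    have key : (n.choose k * n.choose (k + 2)) * ((n - k) * (k + 2))
        ≤ n.choose (k + 1) ^ 2 * ((n - k) * (k + 2)) := by
      have e : (n.choose k * n.choose (k + 2)) * ((n - k) * (k + 2))
          = n.choose (k + 1) ^ 2 * ((k + 1) * (n - (k + 1))) := by
        have e1 : n.choose k * n.choose (k + 2) * ((n - k) * (k + 2))
            = (n.choose k * (n - k)) * (n.choose (k + 2) * (k + 2)) := by ring
        rw [e1, ← h1, h2]; ring
      rw [e]
      refine Nat.mul_le_mul_left _ ?_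
      calc (k + 1) * (n - (k + 1)) ≤ (k + 2) * (n - k) :=
            Nat.mul_le_mul (by omega) (by omega)
        _ = (n - k) * (k + 2) := Nat.mul_comm _ _
    exact Nat.le_of_mul_le_mul_right key hpos

lemma choose_lc_real (n k : ℕ) :
    (n.choose k : ℝ) * n.choose (k + 2) ≤ (n.choose (k + 1) : ℝ) ^ 2 := by
  exact_mod_cast choose_lc_nat n k

lemma cast_choose_three (n : ℕ) : ((n.choose 3 : ℕ) : ℝ) = n * (n - 1) * (n - 2) / 6 := by
  induction n with
  | zero => simp
  | succ n ih =>
    rw [show n + 1 = n + 1 from rfl, Nat.choose_succ_succ]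
    push_cast
    rw [ih, Nat.cast_choose_two]
    push_cast
    ring

/-- The coefficient sequence of `(1+X)^c + X`. -/
noncomputable def useq (c : ℕ) : ℕ → ℝ := fun k => (c.choose k : ℝ) + if k = 1 then 1 else 0

lemma useq_nonneg (c k : ℕ) : 0 ≤ useq c k := by
  unfold useq; positivity

lemma useq_zero (c : ℕ) : useq c 0 = 1 := by simp [useq]

lemma useq_one (c : ℕ) : useq c 1 = (c : ℝ) + 1 := by simp [useq]

lemma useq_two (c : ℕ) : useq c 2 = (c.choose 2 : ℝ) := by simp [useq]

lemma useq_three (c : ℕ) : useq c 3 = (c.choose 3 : ℝ) := by simp [useq]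

lemma useq_lc (c k : ℕ) : useq c k * useq c (k + 2) ≤ useq c (k + 1) ^ 2 := by
  match k with
  | 0 =>
    rw [useq_zero, useq_two, useq_one, one_mul, Nat.cast_choose_two]
    have : (0 : ℝ) ≤ (c : ℝ) := Nat.cast_nonneg c
    nlinarith
  | 1 =>
    rw [useq_one, useq_three, useq_two]
    by_cases hc : c ≤ 2
    · rw [Nat.choose_eq_zero_of_lt (show c < 3 by omega), Nat.cast_zero, mul_zero]
      positivity
    · push_neg at hc
      have hc3 : (3 : ℝ) ≤ (c : ℝ) := by exact_mod_cast hc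
      rw [cast_choose_three, Nat.cast_choose_two]
      nlinarith [sq_nonneg ((c : ℝ) - 1), sq_nonneg (c : ℝ), mul_nonneg (mul_nonneg (by linarith : (0:ℝ) ≤ (c:ℝ)) (by linarith : (0:ℝ) ≤ (c:ℝ) - 1)) (by linarith : (0:ℝ) ≤ (c:ℝ) - 2)]
  | m + 2 =>
    have e1 : useq c (m + 2) = (c.choose (m + 2) : ℝ) := by simp [useq]
    have e2 : useq c (m + 3) = (c.choose (m + 3) : ℝ) := by simp [useq]
    have e3 : useq c (m + 4) = (c.choose (m + 4) : ℝ) := by simp [useq]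
    rw [show m + 2 + 2 = m + 4 from rfl, show m + 2 + 1 = m + 3 from rfl, e1, e2, e3]
    exact choose_lc_real c (m + 2)

lemma useq_zero_imp (c k : ℕ) : useq c k = 0 → useq c (k + 1) = 0 := by
  match k with
  | 0 => rw [useq_zero]; intro h; norm_num at h
  | 1 => rw [useq_one]; intro h; have : (0:ℝ) ≤ (c:ℝ) := Nat.cast_nonneg c; linarith
  | m + 2 =>
    have e1 : useq c (m + 2) = (c.choose (m + 2) : ℝ) := by simp [useq]
    have e2 : useq c (m + 3) = (c.choose (m + 3) : ℝ) := by simp [useq]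
    rw [e1, show m + 2 + 1 = m + 3 from rfl, e2]
    intro h
    have h' : c.choose (m + 2) = 0 := by exact_mod_cast h
    have : c < m + 2 := by
      by_contra hcon
      exact absurd h' (Nat.choose_pos (by omega)).ne'
    rw [Nat.choose_eq_zero_of_lt (show c < m + 3 by omega), Nat.cast_zero]

lemma q_coeff (c k : ℕ) : ((1 + X : Polynomial ℝ) ^ c + X).coeff k = useq c k := by
  rw [coeff_add, coeff_one_add_X_pow, coeff_X, useq]
  congr 1
  simp [eq_comm]

/-- The independence polynomial `(1+x)^{l1+l2} + x(1+x)^{l2} + x(1+x)^{l1}` of the double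
star `S_{l1,l2}` is LC⁺ for all `l1, l2 ≥ 0`. -/
theorem LCPlus_doubleStar_indepPoly (l1 l2 : ℕ) :
    LCPlus ((1 + X : Polynomial ℝ) ^ (l1 + l2) + X * (1 + X) ^ l2 + X * (1 + X) ^ l1) := by
  set P : Polynomial ℝ := (1 + X : Polynomial ℝ) ^ (l1 + l2) + X * (1 + X) ^ l2 + X * (1 + X) ^ l1 with hP
  have hPQ : P = ((1 + X : Polynomial ℝ) ^ l1 + X) * ((1 + X : Polynomial ℝ) ^ l2 + X) - X ^ 2 := by
    rw [hP]; ring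
  -- the convolution sequence
  set w : ℕ → ℝ := fun m => (((1 + X : Polynomial ℝ) ^ l1 + X) * ((1 + X : Polynomial ℝ) ^ l2 + X)).coeff m with hwdef
  have hw : ∀ m, w m = ∑ i ∈ Finset.range (m + 1), useq l1 i * useq l2 (m - i) := by
    intro m
    rw [hwdef]; dsimp only
    rw [coeff_mul, Finset.Nat.sum_antidiagonal_eq_sum_range_succ_mk]
    exact Finset.sum_congr rfl fun i _ => by rw [q_coeff, q_coeff]
  have hPw : ∀ m, P.coeff m = w m - (if m = 2 then 1 else 0) := by
    intro m
    rw [hPQ, coeff_sub, coeff_X_pow]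
  have hwnn : ∀ m, 0 ≤ w m := by
    intro m
    rw [hw]
    exact Finset.sum_nonneg fun i _ => mul_nonneg (useq_nonneg _ _) (useq_nonneg _ _)
  have hwlc : ∀ m, w m * w (m + 2) ≤ w (m + 1) ^ 2 := by
    intro m
    rw [hw, hw, hw]
    exact conv_lc (useq l1) (useq l2) (useq_nonneg l1) (useq_nonneg l2)
      (useq_lc l1) (useq_lc l2) (useq_zero_imp l1) (useq_zero_imp l2) m
  constructor
  · -- positivity of coefficients up to the degree
    intro i hi
    have hcoeff : ∀ m : ℕ, P.coeff m = ((l1 + l2).choose m : ℝ)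
        + (if m = 0 then 0 else ((l2.choose (m - 1) : ℝ) + (l1.choose (m - 1) : ℝ))) := by
      intro m
      rw [hP]
      match m with
      | 0 => simp [mul_coeff_zero, coeff_one_add_X_pow]
      | j + 1 =>
        rw [coeff_add, coeff_add, coeff_X_mul, coeff_X_mul, coeff_one_add_X_pow,
          coeff_one_add_X_pow, coeff_one_add_X_pow]
        simp [add_assoc]
    have hdegN : P.natDegree ≤ max (l1 + l2) (max (l2 + 1) (l1 + 1)) := by
      have h1 : ((1 + X : Polynomial ℝ) ^ (l1 + l2)).natDegree ≤ l1 + l2 := by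
        refine natDegree_pow_le.trans ?_
        have : (1 + X : Polynomial ℝ).natDegree ≤ 1 := by
          rw [add_comm]
          rw [show (X + 1 : Polynomial ℝ) = X + C 1 by simp]
          exact (natDegree_X_add_C (1 : ℝ)).le
        nlinarith [this]
      have h2 : ∀ c : ℕ, (X * (1 + X : Polynomial ℝ) ^ c).natDegree ≤ c + 1 := by
        intro c
        refine natDegree_mul_le.trans ?_
        have hX : (X : Polynomial ℝ).natDegree ≤ 1 := natDegree_X_le
        have hc : ((1 + X : Polynomial ℝ) ^ c).natDegree ≤ c := by
          refine natDegree_pow_le.trans ?_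
          have : (1 + X : Polynomial ℝ).natDegree ≤ 1 := by
            rw [add_comm, show (X + 1 : Polynomial ℝ) = X + C 1 by simp]
            exact (natDegree_X_add_C (1 : ℝ)).le
          nlinarith [this]
        omega
      rw [hP]
      refine (natDegree_add_le _ _).trans
        (max_le ((natDegree_add_le _ _).trans (max_le ?_ ?_)) ?_)
      · exact h1.trans (le_max_left _ _)
      · exact (h2 l2).trans (le_max_of_le_right (le_max_left _ _))
      · exact (h2 l1).trans (le_max_of_le_right (le_max_right _ _))
    have hiN : i ≤ max (l1 + l2) (max (l2 + 1) (l1 + 1)) := hi.trans hdegN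
    rw [hcoeff i]
    have hnn2 : (0:ℝ) ≤ if i = 0 then 0
        else ((l2.choose (i - 1) : ℝ) + (l1.choose (i - 1) : ℝ)) := by
      split
      · exact le_rfl
      · positivity
    by_cases hin : i ≤ l1 + l2
    · have hpos : 0 < ((l1 + l2).choose i : ℝ) := by exact_mod_cast Nat.choose_pos hin
      linarith
    · push_neg at hin
      have hi0 : i ≠ 0 := by omega
      rw [if_neg hi0]
      have hC : (0:ℝ) ≤ ((l1 + l2).choose i : ℝ) := Nat.cast_nonneg _
      rw [le_max_iff, le_max_iff] at hiN
      rcases hiN with h | h | h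
      · omega
      · have hp : 0 < (l2.choose (i - 1) : ℝ) := by
          exact_mod_cast Nat.choose_pos (show i - 1 ≤ l2 by omega)
        have : (0:ℝ) ≤ (l1.choose (i - 1) : ℝ) := Nat.cast_nonneg _
        linarith
      · have hp : 0 < (l1.choose (i - 1) : ℝ) := by
          exact_mod_cast Nat.choose_pos (show i - 1 ≤ l1 by omega)
        have : (0:ℝ) ≤ (l2.choose (i - 1) : ℝ) := Nat.cast_nonneg _
        linarith
  · -- log-concavity
    intro k
    rw [hPw, hPw, hPw]
    match k with
    | 0 =>
      have hw0 : w 0 = 1 := by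
        rw [hw]; simp [useq_zero]
      simp only [show (0:ℕ) ≠ 2 from by omega, show (1:ℕ) ≠ 2 from by omega, if_neg, if_pos rfl,
        reduceIte]
      have := hwlc 0
      rw [hw0, one_mul] at this
      nlinarith [this]
    | 1 =>
      simp only [show (1:ℕ) ≠ 2 from by omega, show (3:ℕ) ≠ 2 from by omega, reduceIte]
      have hw1 : w 1 = (l1 : ℝ) + (l2 : ℝ) + 2 := by
        rw [hw, Finset.sum_range_succ, Finset.sum_range_succ, Finset.sum_range_zero]
        norm_num [useq_zero, useq_one]
        try ring
      have hw2 : w 2 = (l2.choose 2 : ℝ) + ((l1 : ℝ) + 1) * ((l2 : ℝ) + 1) + (l1.choose 2 : ℝ) := by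
        rw [hw, Finset.sum_range_succ, Finset.sum_range_succ, Finset.sum_range_succ,
          Finset.sum_range_zero]
        norm_num [useq_zero, useq_one, useq_two]
        try ring
      have hw3 : w 3 = (l2.choose 3 : ℝ) + ((l1 : ℝ) + 1) * (l2.choose 2 : ℝ)
          + (l1.choose 2 : ℝ) * ((l2 : ℝ) + 1) + (l1.choose 3 : ℝ) := by
        rw [hw, Finset.sum_range_succ, Finset.sum_range_succ, Finset.sum_range_succ,
          Finset.sum_range_succ, Finset.sum_range_zero]
        norm_num [useq_zero, useq_one, useq_two, useq_three]
        try ring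
      rw [sub_zero, sub_zero, hw1, hw2, hw3, Nat.cast_choose_two, Nat.cast_choose_two,
        cast_choose_three, cast_choose_three]
      have hA : (0:ℝ) ≤ (l1 : ℝ) := Nat.cast_nonneg _
      have hB : (0:ℝ) ≤ (l2 : ℝ) := Nat.cast_nonneg _
      nlinarith [mul_nonneg hA hB, sq_nonneg ((l1:ℝ) - (l2:ℝ)), sq_nonneg ((l1:ℝ) + (l2:ℝ)),
        mul_nonneg (mul_nonneg hA hB) hA, mul_nonneg (mul_nonneg hA hB) hB,
        mul_nonneg (mul_nonneg (mul_nonneg hA hB) hA) hB,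
        mul_nonneg (mul_nonneg (mul_nonneg hA hA) hA) hA,
        mul_nonneg (mul_nonneg (mul_nonneg hB hB) hB) hB,
        mul_nonneg (mul_nonneg (mul_nonneg hA hA) hA) hB,
        mul_nonneg (mul_nonneg (mul_nonneg hA hB) hB) hB,
        mul_nonneg (mul_nonneg hA hA) hA, mul_nonneg (mul_nonneg hB hB) hB,
        mul_nonneg hA hA, mul_nonneg hB hB]
    | 2 =>
      simp only [reduceIte, show (3:ℕ) ≠ 2 from by omega, show (4:ℕ) ≠ 2 from by omega]
      have := hwlc 2
      have h4 := hwnn 4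
      nlinarith [this, h4]
    | m + 3 =>
      simp only [show m + 3 ≠ 2 from by omega, show m + 4 ≠ 2 from by omega,
        show m + 5 ≠ 2 from by omega, reduceIte]
      have := hwlc (m + 3)
      simpa using this
end

section
/- For q ∈ [0,1], the polynomial f_q(x) = 1 + 6x + (11-4q)x^2 + (6-4q)x^3 + x^4 is LC+ if and only if q ≤ (11-√21)/8. -/
open Polynomial

/-- For `q ∈ [0,1]`, the polynomial `1 + 6x + (11-4q)x² + (6-4q)x³ + x⁴` is LC⁺ if and only
if `q ≤ (11-√21)/8`. -/
theorem LCPlus_quartic_iff (q : ℝ) (hq0 : 0 ≤ q) (hq1 : q ≤ 1) :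
    LCPlus (1 + 6 * X + C (11 - 4 * q) * X ^ 2 + C (6 - 4 * q) * X ^ 3 + X ^ 4 : Polynomial ℝ)
      ↔ q ≤ (11 - Real.sqrt 21) / 8 := by
  set P : Polynomial ℝ :=
    1 + 6 * X + C (11 - 4 * q) * X ^ 2 + C (6 - 4 * q) * X ^ 3 + X ^ 4 with hP
  have hdeg : P.natDegree = 4 := by
    unfold P; compute_degree!
  have hc0 : P.coeff 0 = 1 := by
    simp only [hP, coeff_add, coeff_C_mul, coeff_X_pow, coeff_one, coeff_X, coeff_ofNat_mul]
    norm_num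
  have hc1 : P.coeff 1 = 6 := by
    simp only [hP, coeff_add, coeff_C_mul, coeff_X_pow, coeff_one, coeff_X, coeff_ofNat_mul]
    norm_num
  have hc2 : P.coeff 2 = 11 - 4 * q := by
    simp only [hP, coeff_add, coeff_C_mul, coeff_X_pow, coeff_one, coeff_X, coeff_ofNat_mul]
    norm_num
  have hc3 : P.coeff 3 = 6 - 4 * q := by
    simp only [hP, coeff_add, coeff_C_mul, coeff_X_pow, coeff_one, coeff_X, coeff_ofNat_mul]
    norm_num
  have hc4 : P.coeff 4 = 1 := by
    simp only [hP, coeff_add, coeff_C_mul, coeff_X_pow, coeff_one, coeff_X, coeff_ofNat_mul]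
    norm_num
  have hbig : ∀ n : ℕ, 4 < n → P.coeff n = 0 := fun n hn =>
    coeff_eq_zero_of_natDegree_lt (by rw [hdeg]; exact hn)
  have hs0 : (0:ℝ) ≤ Real.sqrt 21 := Real.sqrt_nonneg _
  have hs2 : Real.sqrt 21 ^ 2 = 21 := Real.sq_sqrt (by norm_num)
  constructor
  · rintro ⟨-, hlc⟩
    have h2 := hlc 2
    rw [hc2, hc3, hc4] at h2
    have hsq : (21:ℝ) ≤ (11 - 8 * q) ^ 2 := by nlinarith
    have : Real.sqrt 21 ≤ 11 - 8 * q := by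
      calc Real.sqrt 21 ≤ Real.sqrt ((11 - 8 * q) ^ 2) := Real.sqrt_le_sqrt hsq
        _ = 11 - 8 * q := Real.sqrt_sq (by linarith)
    linarith
  · intro hq
    have hsq : (21:ℝ) ≤ (11 - 8 * q) ^ 2 := by nlinarith
    constructor
    · intro i hi
      rw [hdeg] at hi
      interval_cases i
      · rw [hc0]; norm_num
      · rw [hc1]; norm_num
      · rw [hc2]; linarith
      · rw [hc3]; linarith
      · rw [hc4]; norm_num
    · intro k
      match k with
      | 0 => rw [hc0, hc1, hc2]; nlinarith
      | 1 => rw [hc1, hc2, hc3]; nlinarith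
      | 2 => rw [hc2, hc3, hc4]; nlinarith
      | (n+3) =>
        rw [hbig (n+3+2) (by omega), mul_zero]
        positivity
end

section
/- Let f_q(x) = 1 + 6x + (11-4q)x^2 + (6-4q)x^3 + x^4. For all q_1 ∈ [0,1] and q_2 ∈ [0, (13-√33)/8], the product f_{q_1}(x) · f_{q_2}(x) is LC+. -/
open Polynomial

lemma quartic_prod_eq (q1 q2 : ℝ) :
    ((1 + 6 * X + C (11 - 4 * q1) * X ^ 2 + C (6 - 4 * q1) * X ^ 3 + X ^ 4) *
      (1 + 6 * X + C (11 - 4 * q2) * X ^ 2 + C (6 - 4 * q2) * X ^ 3 + X ^ 4) :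
        Polynomial ℝ) =
    C 1 + C 12 * X + C (58 - 4 * (q1 + q2)) * X ^ 2 + C (144 - 28 * (q1 + q2)) * X ^ 3 +
      C (195 - 68 * (q1 + q2) + 16 * (q1 * q2)) * X ^ 4 +
      C (144 - 68 * (q1 + q2) + 32 * (q1 * q2)) * X ^ 5 +
      C (58 - 28 * (q1 + q2) + 16 * (q1 * q2)) * X ^ 6 +
      C (12 - 4 * (q1 + q2)) * X ^ 7 + C 1 * X ^ 8 := by
  simp only [map_sub, map_add, map_mul, map_one, map_ofNat]
  ring

set_option maxHeartbeats 1600000 in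
/-- With `f_q(x) = 1 + 6x + (11-4q)x² + (6-4q)x³ + x⁴`, the product `f_{q₁}·f_{q₂}` is LC⁺
whenever `q₁ ∈ [0,1]` and `q₂ ∈ [0, (13-√33)/8]`. -/
theorem LCPlus_quartic_product (q1 q2 : ℝ) (h10 : 0 ≤ q1) (h11 : q1 ≤ 1)
    (h20 : 0 ≤ q2) (h21 : q2 ≤ (13 - Real.sqrt 33) / 8) :
    LCPlus ((1 + 6 * X + C (11 - 4 * q1) * X ^ 2 + C (6 - 4 * q1) * X ^ 3 + X ^ 4) *
      (1 + 6 * X + C (11 - 4 * q2) * X ^ 2 + C (6 - 4 * q2) * X ^ 3 + X ^ 4) :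
        Polynomial ℝ) := by
  have h5 : (5:ℝ) ≤ Real.sqrt 33 := by
    nlinarith [Real.sq_sqrt (show (0:ℝ) ≤ 33 by norm_num), Real.sqrt_nonneg 33]
  have h22 : q2 ≤ 1 := by linarith
  have hkey : 33 ≤ (13 - 8 * q2) ^ 2 := by
    nlinarith [Real.sq_sqrt (show (0:ℝ) ≤ 33 by norm_num), Real.sqrt_nonneg 33]
  set P := ((1 + 6 * X + C (11 - 4 * q1) * X ^ 2 + C (6 - 4 * q1) * X ^ 3 + X ^ 4) *
      (1 + 6 * X + C (11 - 4 * q2) * X ^ 2 + C (6 - 4 * q2) * X ^ 3 + X ^ 4) :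
        Polynomial ℝ) with hP
  have hd : P.natDegree ≤ 8 := by
    rw [hP, quartic_prod_eq]; compute_degree
  have hc : ∀ n, P.coeff n =
      if n = 0 then 1 else if n = 1 then 12 else if n = 2 then 58 - 4 * (q1 + q2)
      else if n = 3 then 144 - 28 * (q1 + q2)
      else if n = 4 then 195 - 68 * (q1 + q2) + 16 * (q1 * q2)
      else if n = 5 then 144 - 68 * (q1 + q2) + 32 * (q1 * q2)
      else if n = 6 then 58 - 28 * (q1 + q2) + 16 * (q1 * q2)
      else if n = 7 then 12 - 4 * (q1 + q2) else if n = 8 then 1 else 0 := by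
    intro n
    rw [hP, quartic_prod_eq]
    simp only [coeff_add, coeff_C_mul, coeff_X_pow, coeff_C, coeff_X]
    rcases n with _|_|_|_|_|_|_|_|_|n <;> norm_num
    simp only [if_neg (show ¬ n+1+1+1+1+1+1+1+1+1 = 2 by omega)]
    simp only [if_neg (show ¬ n+1+1+1+1+1+1+1+1+1 = 3 by omega)]
    simp only [if_neg (show ¬ n+1+1+1+1+1+1+1+1+1 = 4 by omega)]
    simp only [if_neg (show ¬ n+1+1+1+1+1+1+1+1+1 = 5 by omega)]
    simp only [if_neg (show ¬ n+1+1+1+1+1+1+1+1+1 = 6 by omega)]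
    simp only [if_neg (show ¬ n+1+1+1+1+1+1+1+1+1 = 7 by omega)]
    simp only [if_neg (show ¬ n+1+1+1+1+1+1+1+1+1 = 8 by omega)]
    norm_num
  have ha : (0:ℝ) ≤ 1 - q1 := by linarith
  have hb : (0:ℝ) ≤ 1 - q2 := by linarith
  have hp : 0 ≤ q1 * q2 := mul_nonneg h10 h20
  have B : ∀ u v w z : ℝ, 0 ≤ u → 0 ≤ v → 0 ≤ w → 0 ≤ z → 0 ≤ u * v * w * z :=
    fun u v w z hu hv hw hz => mul_nonneg (mul_nonneg (mul_nonneg hu hv) hw) hz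
  constructor
  · intro i hi
    have hi8 : i ≤ 8 := le_trans hi hd
    rw [hc i]
    interval_cases i <;> norm_num <;> nlinarith
  · intro k
    by_cases hk : 7 ≤ k
    · have h9 : P.coeff (k + 2) = 0 :=
        coeff_eq_zero_of_natDegree_lt (by omega)
      rw [h9, mul_zero]
      positivity
    · push_neg at hk
      have hB := fun a b c d e f g h => B a b c d e f g h
      interval_cases k <;> simp only [hc] <;> norm_num
      · nlinarith
      · nlinarith
      · nlinarith [B q1 q1 q2 q2 h10 h10 h20 h20, B q1 q1 q2 (1-q2) h10 h10 h20 hb,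
          B q1 q1 (1-q2) (1-q2) h10 h10 hb hb, B q1 (1-q1) q2 q2 h10 ha h20 h20,
          B q1 (1-q1) q2 (1-q2) h10 ha h20 hb, B q1 (1-q1) (1-q2) (1-q2) h10 ha hb hb,
          B (1-q1) (1-q1) q2 q2 ha ha h20 h20, B (1-q1) (1-q1) q2 (1-q2) ha ha h20 hb,
          B (1-q1) (1-q1) (1-q2) (1-q2) ha ha hb hb]
      · nlinarith [B q1 q1 q2 q2 h10 h10 h20 h20, B q1 q1 q2 (1-q2) h10 h10 h20 hb,
          B q1 q1 (1-q2) (1-q2) h10 h10 hb hb, B q1 (1-q1) q2 q2 h10 ha h20 h20,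
          B q1 (1-q1) q2 (1-q2) h10 ha h20 hb, B q1 (1-q1) (1-q2) (1-q2) h10 ha hb hb,
          B (1-q1) (1-q1) q2 q2 ha ha h20 h20, B (1-q1) (1-q1) q2 (1-q2) ha ha h20 hb,
          B (1-q1) (1-q1) (1-q2) (1-q2) ha ha hb hb]
      · nlinarith [B q1 q1 q2 q2 h10 h10 h20 h20, B q1 q1 q2 (1-q2) h10 h10 h20 hb,
          B q1 q1 (1-q2) (1-q2) h10 h10 hb hb, B q1 (1-q1) q2 q2 h10 ha h20 h20,
          B q1 (1-q1) q2 (1-q2) h10 ha h20 hb, B q1 (1-q1) (1-q2) (1-q2) h10 ha hb hb,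
          B (1-q1) (1-q1) q2 q2 ha ha h20 h20, B (1-q1) (1-q1) q2 (1-q2) ha ha h20 hb,
          B (1-q1) (1-q1) (1-q2) (1-q2) ha ha hb hb]
      · nlinarith [B q1 q1 q2 q2 h10 h10 h20 h20, B q1 q1 q2 (1-q2) h10 h10 h20 hb,
          B q1 q1 (1-q2) (1-q2) h10 h10 hb hb, B q1 (1-q1) q2 q2 h10 ha h20 h20,
          B q1 (1-q1) q2 (1-q2) h10 ha h20 hb, B q1 (1-q1) (1-q2) (1-q2) h10 ha hb hb,
          B (1-q1) (1-q1) q2 q2 ha ha h20 h20, B (1-q1) (1-q1) q2 (1-q2) ha ha h20 hb,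
          B (1-q1) (1-q1) (1-q2) (1-q2) ha ha hb hb]
      · nlinarith [hkey, mul_nonneg (sub_nonneg.2 h22) (sub_nonneg.2 h11), hp]
end

section
/- Let f_q(x) = 1 + 10x + (37-4q)x^2 + (62-20q)x^3 + (46-28q)x^4 + (12-8q)x^5 + x^6. For all q_1, q_2 ∈ [0,1], the product f_{q_1}(x) · f_{q_2}(x) is LC+. -/
open Polynomial

set_option maxHeartbeats 2000000 in
/-- With `f_q(x) = 1 + 10x + (37-4q)x² + (62-20q)x³ + (46-28q)x⁴ + (12-8q)x⁵ + x⁶`, the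
product `f_{q₁}·f_{q₂}` is LC⁺ for all `q₁, q₂ ∈ [0,1]`. -/
theorem LCPlus_sextic_product (q1 q2 : ℝ) (h10 : 0 ≤ q1) (h11 : q1 ≤ 1)
    (h20 : 0 ≤ q2) (h21 : q2 ≤ 1) :
    LCPlus ((1 + 10 * X + C (37 - 4 * q1) * X ^ 2 + C (62 - 20 * q1) * X ^ 3 +
        C (46 - 28 * q1) * X ^ 4 + C (12 - 8 * q1) * X ^ 5 + X ^ 6) *
      (1 + 10 * X + C (37 - 4 * q2) * X ^ 2 + C (62 - 20 * q2) * X ^ 3 +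
        C (46 - 28 * q2) * X ^ 4 + C (12 - 8 * q2) * X ^ 5 + X ^ 6) : Polynomial ℝ) := by
  have hp : ((1 + 10 * X + C (37 - 4 * q1) * X ^ 2 + C (62 - 20 * q1) * X ^ 3 +
        C (46 - 28 * q1) * X ^ 4 + C (12 - 8 * q1) * X ^ 5 + X ^ 6) *
      (1 + 10 * X + C (37 - 4 * q2) * X ^ 2 + C (62 - 20 * q2) * X ^ 3 +
        C (46 - 28 * q2) * X ^ 4 + C (12 - 8 * q2) * X ^ 5 + X ^ 6) : Polynomial ℝ) =
      C (1 : ℝ) + C (20 : ℝ) * X + C (174 - 4 * q1 - 4 * q2) * X ^ 2 +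
        C (864 - 60 * q1 - 60 * q2) * X ^ 3 +
        C (2701 - 376 * q1 - 376 * q2 + 16 * q1 * q2) * X ^ 4 +
        C (5532 - 1276 * q1 - 1276 * q2 + 160 * q1 * q2) * X ^ 5 +
        C (7490 - 2540 * q1 - 2540 * q2 + 624 * q1 * q2) * X ^ 6 +
        C (6612 - 3000 * q1 - 3000 * q2 + 1184 * q1 * q2) * X ^ 7 +
        C (3678 - 2028 * q1 - 2028 * q2 + 1104 * q1 * q2) * X ^ 8 +
        C (1228 - 724 * q1 - 724 * q2 + 448 * q1 * q2) * X ^ 9 +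
        C (236 - 124 * q1 - 124 * q2 + 64 * q1 * q2) * X ^ 10 +
        C (24 - 8 * q1 - 8 * q2) * X ^ 11 + C (1 : ℝ) * X ^ 12 := by
    simp only [map_sub, map_add, map_mul, map_ofNat, map_one]
    ring
  rw [hp]
  have hdeg : (C (1 : ℝ) + C (20 : ℝ) * X + C (174 - 4 * q1 - 4 * q2) * X ^ 2 +
        C (864 - 60 * q1 - 60 * q2) * X ^ 3 +
        C (2701 - 376 * q1 - 376 * q2 + 16 * q1 * q2) * X ^ 4 +
        C (5532 - 1276 * q1 - 1276 * q2 + 160 * q1 * q2) * X ^ 5 +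
        C (7490 - 2540 * q1 - 2540 * q2 + 624 * q1 * q2) * X ^ 6 +
        C (6612 - 3000 * q1 - 3000 * q2 + 1184 * q1 * q2) * X ^ 7 +
        C (3678 - 2028 * q1 - 2028 * q2 + 1104 * q1 * q2) * X ^ 8 +
        C (1228 - 724 * q1 - 724 * q2 + 448 * q1 * q2) * X ^ 9 +
        C (236 - 124 * q1 - 124 * q2 + 64 * q1 * q2) * X ^ 10 +
        C (24 - 8 * q1 - 8 * q2) * X ^ 11 + C (1 : ℝ) * X ^ 12).natDegree ≤ 12 := by
    compute_degree
  constructor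
  · intro i hi
    have hi12 : i ≤ 12 := hi.trans hdeg
    interval_cases i <;>
      · simp only [coeff_add, coeff_C_mul, coeff_X_pow, coeff_X, coeff_C]
        norm_num
        try nlinarith [mul_nonneg h10 h20, mul_nonneg (sub_nonneg.2 h11) (sub_nonneg.2 h21),
          mul_nonneg h10 (sub_nonneg.2 h21), mul_nonneg (sub_nonneg.2 h11) h20]
  · intro k
    by_cases hk : k ≤ 10
    · interval_cases k <;>
        · simp only [coeff_add, coeff_C_mul, coeff_X_pow, coeff_X, coeff_C]
          norm_num
          try nlinarith [mul_nonneg h10 h20, mul_nonneg (sub_nonneg.2 h11) (sub_nonneg.2 h21),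
            mul_nonneg h10 (sub_nonneg.2 h21), mul_nonneg (sub_nonneg.2 h11) h20,
            sq_nonneg (q1 - q2), sq_nonneg (q1 + q2), sq_nonneg (q1*q2),
            mul_nonneg (mul_nonneg h10 h20) (mul_nonneg (sub_nonneg.2 h11) (sub_nonneg.2 h21)),
            mul_nonneg (mul_nonneg h10 h20) (mul_nonneg h10 h20),
            mul_nonneg (mul_nonneg (sub_nonneg.2 h11) (sub_nonneg.2 h21)) (mul_nonneg (sub_nonneg.2 h11) (sub_nonneg.2 h21))]
    · have h13 : 12 < k + 2 := by omega
      rw [coeff_eq_zero_of_natDegree_lt (lt_of_le_of_lt hdeg h13), mul_zero]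
      positivity
end

section
/- Let g(x) = Σ_{i=0}^ℓ g_i x^i be a real polynomial with all coefficients g_0,...,g_ℓ positive, and for 0 ≤ k ≤ n+ℓ let a_k = Σ_{i=0}^ℓ g_i · C(n, k-i) be the coefficient of x^k in g(x)(1+x)^n (with the convention C(n,j) = 0 for j < 0 or j > n). Then a_{k-1} ≤ a_k for all 1 ≤ k ≤ ⌈n/2⌉, and a_k ≥ a_{k+1} for all k ≥ ⌊n/2⌋ + ℓ. -/
open Finset

lemma choose_mono_aux1 (n r : ℕ) (h : 2 * (r + 1) ≤ n + 1) :
    n.choose r ≤ n.choose (r + 1) := by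
  have key := Nat.choose_succ_right_eq n r
  have h1 : r + 1 ≤ n - r := by omega
  have : n.choose r * (r + 1) ≤ n.choose (r + 1) * (r + 1) := by
    rw [key]
    exact Nat.mul_le_mul_left _ h1
  exact Nat.le_of_mul_le_mul_right this (by omega)

lemma choose_mono_aux2 (n s : ℕ) (h : n ≤ 2 * s + 1) :
    n.choose (s + 1) ≤ n.choose s := by
  have key := Nat.choose_succ_right_eq n s
  have h1 : n - s ≤ s + 1 := by omega
  have : n.choose (s + 1) * (s + 1) ≤ n.choose s * (s + 1) := by
    rw [key]
    exact Nat.mul_le_mul_left _ h1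
  exact Nat.le_of_mul_le_mul_right this (by omega)

/-- `binCoeffSum g ℓ n k = ∑_{i=0}^{ℓ} g_i · C(n, k-i)`, the coefficient of `x^k` in
`g(x)(1+x)^n` where `g(x) = ∑_{i=0}^{ℓ} g_i x^i`, with the convention `C(n,j) = 0` for
`j < 0` (enforced by the guard `i ≤ k`) or `j > n`. -/
noncomputable def binCoeffSum (g : ℕ → ℝ) (ℓ n k : ℕ) : ℝ :=
  ∑ i ∈ Finset.range (ℓ + 1), if i ≤ k then g i * (n.choose (k - i) : ℝ) else 0

/-- If `g_0, ..., g_ℓ` are positive then the coefficients `a_k` of `g(x)(1+x)^n` satisfy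
`a_{k-1} ≤ a_k` for `1 ≤ k ≤ ⌈n/2⌉`, and `a_k ≥ a_{k+1}` for `⌊n/2⌋ + ℓ ≤ k` (with
`k + 1 ≤ n + ℓ`, so that both coefficients are within range). -/
theorem binCoeffSum_monotone (ℓ : ℕ) (g : ℕ → ℝ) (hg : ∀ i ≤ ℓ, 0 < g i) (n : ℕ) :
    (∀ k : ℕ, 1 ≤ k → k ≤ (n + 1) / 2 →
      binCoeffSum g ℓ n (k - 1) ≤ binCoeffSum g ℓ n k) ∧
    (∀ k : ℕ, n / 2 + ℓ ≤ k → k + 1 ≤ n + ℓ →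
      binCoeffSum g ℓ n (k + 1) ≤ binCoeffSum g ℓ n k) := by
  constructor
  · intro k hk1 hk2
    unfold binCoeffSum
    apply Finset.sum_le_sum
    intro i hi
    rw [Finset.mem_range] at hi
    have hgi : 0 < g i := hg i (by omega)
    by_cases h1 : i ≤ k - 1
    · rw [if_pos h1, if_pos (by omega : i ≤ k)]
      apply mul_le_mul_of_nonneg_left _ hgi.le
      have hr : k - i = (k - 1 - i) + 1 := by omega
      rw [hr]
      exact_mod_cast choose_mono_aux1 n (k - 1 - i) (by omega)
    · rw [if_neg h1]
      by_cases h2 : i ≤ k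
      · rw [if_pos h2]
        positivity
      · rw [if_neg h2]
  · intro k hk1 hk2
    unfold binCoeffSum
    apply Finset.sum_le_sum
    intro i hi
    rw [Finset.mem_range] at hi
    have hgi : 0 < g i := hg i (by omega)
    rw [if_pos (by omega : i ≤ k + 1), if_pos (by omega : i ≤ k)]
    apply mul_le_mul_of_nonneg_left _ hgi.le
    have hr : k + 1 - i = (k - i) + 1 := by omega
    rw [hr]
    exact_mod_cast choose_mono_aux2 n (k - i) (by omega)
end
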